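/- arXiv:1804.09609 — 11 statements merged into one kernel-verified Lean document; each statement's English description precedes it below -/
import Mathlib

section
/- Let 𝒞 be a cone of formal languages and let G be a finitely generated group whose word problem WP(G), with respect to some choice of generators, belongs to 𝒞. Then for every finitely generated subgroup H ≤ G, the word problem WP(H) with respect to any choice of generators of H belongs to 𝒞. -/
/-!
Lift each generator of `H` to a word over the generators of `G` representing the same element.
This gives a monoid homomorphism `f : β* → α*` with `π_G ∘ f = π_H` (up to the inclusion
`H ≤ G`), so a word `w` is trivial in `H` iff `f w` is trivial in `G`; that is,
`WP(H) = f⁻¹(WP(G))`, which lies in any cone containing `WP(G)`.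
-/

/-- A *cone* (full trio): a class of languages over finite alphabets containing
a nonempty language and closed under monoid-homomorphism images, preimages and
intersection with regular languages. -/
structure LanguageCone where
  mem : ∀ (α : Type) [Fintype α], Language α → Prop
  exists_nonempty : ∃ (α : Type) (_ : Fintype α) (L : Language α),
      mem α L ∧ Set.Nonempty (L : Set (List α))
  image_mem : ∀ (α β : Type) [Fintype α] [Fintype β]
      (f : FreeMonoid α →* FreeMonoid β) (L : Language α),
      mem α L → mem β ((f '' (L : Set (FreeMonoid α)) : Set (FreeMonoid β)) : Language β)
  preimage_mem : ∀ (α β : Type) [Fintype α] [Fintype β]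
      (f : FreeMonoid α →* FreeMonoid β) (L : Language β),
      mem β L → mem α ((f ⁻¹' (L : Set (FreeMonoid β)) : Set (FreeMonoid α)) : Language α)
  inter_regular_mem : ∀ (α : Type) [Fintype α] (L R : Language α),
      mem α L → R.IsRegular →
      mem α (((L : Set (List α)) ∩ (R : Set (List α)) : Set (List α)) : Language α)

structure GeneratorChoice (α : Type) (G : Type*) [Fintype α] [Group G] where
  π : FreeMonoid α →* G
  surjective : Function.Surjective π
  inv : α → α
  inv_involutive : Function.Involutive inv
  inv_fixedPointFree : ∀ a, inv a ≠ a
  π_inv : ∀ a, π (FreeMonoid.of (inv a)) = (π (FreeMonoid.of a))⁻¹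

def wordProblem {α : Type} {G : Type*} [Fintype α] [Group G]
    (c : GeneratorChoice α G) : Language α :=
  {w : FreeMonoid α | c.π w = 1}

theorem FreeMonoid.exists_lift_comp_eq {β M N : Type*} [Monoid M] [Monoid N] {p : M →* N}
    (hp : Function.Surjective p) (ψ : FreeMonoid β →* N) :
    ∃ f : FreeMonoid β →* M, p.comp f = ψ := by
  choose s hs using hp
  refine ⟨FreeMonoid.lift (s ∘ ψ ∘ FreeMonoid.of), FreeMonoid.hom_eq fun b => ?_⟩
  simp [hs]

theorem wordProblem_eq_preimage {α β : Type} [Fintype α] [Fintype β] {G K : Type*}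
    [Group G] [Group K] (c : GeneratorChoice α G) (d : GeneratorChoice β K)
    {ι : K →* G} (hι : Function.Injective ι) {f : FreeMonoid β →* FreeMonoid α}
    (hf : c.π.comp f = ι.comp d.π) :
    wordProblem d = (f ⁻¹' (wordProblem c : Set (FreeMonoid α)) : Set (FreeMonoid β)) := by
  refine Set.ext fun w : FreeMonoid β => ?_
  change d.π w = 1 ↔ c.π (f w) = 1
  rw [← MonoidHom.comp_apply, hf, MonoidHom.comp_apply, map_eq_one_iff ι hι]

theorem wordProblem_subgroup_mem_cone_general
    (𝒞 : LanguageCone) (G : Type) [Group G]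
    (α : Type) [Fintype α] (c : GeneratorChoice α G)
    (h : 𝒞.mem α (wordProblem c))
    (H : Subgroup G)
    (β : Type) [Fintype β] (d : GeneratorChoice β H) :
    𝒞.mem β (wordProblem d) := by
  obtain ⟨f, hf⟩ := FreeMonoid.exists_lift_comp_eq c.surjective (H.subtype.comp d.π)
  rw [wordProblem_eq_preimage c d H.subtype_injective hf]
  exact 𝒞.preimage_mem β α f (wordProblem c) h

/-- If the word problem of `G` lies in a cone `𝒞`, then so does
the word problem of every finitely generated subgroup of `G`. -/
theorem wordProblem_subgroup_mem_cone
    (𝒞 : LanguageCone) (G : Type) [Group G] (hfg : Group.FG G)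
    (α : Type) [Fintype α] (c : GeneratorChoice α G)
    (h : 𝒞.mem α (wordProblem c))
    (H : Subgroup G) (hH : Group.FG H)
    (β : Type) [Fintype β] (d : GeneratorChoice β H) :
    𝒞.mem β (wordProblem d) :=
  wordProblem_subgroup_mem_cone_general 𝒞 G α c h H β d
end

section
/- Let 𝒞 be a cone of formal languages and let G be a finitely generated group whose word problem WP(G), with respect to some choice of generators, belongs to 𝒞. If K is a finitely generated group containing G as a subgroup of finite index, then the word problem WP(K) with respect to any choice of generators of K belongs to 𝒞. -/
/-! Reidemeister–Schreier rewriting. With `rep = Quotient.out : K ⧸ G → K`, every generator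
`b` of `K` and coset `q` satisfy `π b * rep q = rep (b • q) * g(b, q)` for some `g(b, q) ∈ G`.
Label each letter of a word `w = b₁ ⋯ bₙ` by the coset `qᵢ = bᵢ₊₁ ⋯ bₙ • G`; the labelled words
over the finite alphabet `(K ⧸ G) × β` that arise this way (`b₁ • q₁ = G`, `bᵢ₊₁ • qᵢ₊₁ = qᵢ`,
`qₙ = G`) form a regular language, and for them `π w * rep G = rep G * ∏ᵢ g(bᵢ, qᵢ)`. So the word
problem of `K` is the projection of the intersection of this regular language with the preimage
of the word problem of `G` under a homomorphism spelling each `g(b, q)` as a word over `α`. -/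

open FreeMonoid

namespace LanguageCone

variable (𝒞 : LanguageCone)

theorem image_inter_regular_mem {β γ : Type} [Fintype β] [Fintype γ] {L R : Language γ}
    (hL : 𝒞.mem γ L) (hR : R.IsRegular) (f : FreeMonoid γ →* FreeMonoid β) :
    𝒞.mem β ((f '' ((L : Set (List γ)) ∩ (R : Set (List γ))) : Set (FreeMonoid β)) :
      Language β) :=
  𝒞.image_mem _ _ f _ (𝒞.inter_regular_mem _ _ _ hL hR)

theorem mem_setOf_map_eq_one {α γ : Type} [Fintype α] [Fintype γ] {H : Type*} [Group H]
    {π : FreeMonoid α →* H} (hπ : Function.Surjective π) (h : 𝒞.mem α {w | π w = 1})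
    (χ : FreeMonoid γ →* H) : 𝒞.mem γ {w | χ w = 1} := by
  choose lift hlift using fun x => hπ (χ (of x))
  have hχ : π.comp (FreeMonoid.lift lift) = χ := FreeMonoid.hom_eq fun x => by simp [hlift]
  exact hχ ▸ 𝒞.preimage_mem _ _ (FreeMonoid.lift lift) _ h

end LanguageCone

namespace Subgroup

variable {K : Type*} [Group K] (G : Subgroup K)

noncomputable def schreierElement (k : K) (q : K ⧸ G) : G :=
  ⟨(k • q).out⁻¹ * (k * q.out), QuotientGroup.eq.mp (by simp [← smul_eq_mul])⟩

theorem mul_out_eq_out_mul_schreierElement (k : K) (q : K ⧸ G) :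
    k * q.out = (k • q).out * G.schreierElement k q := by
  simp [schreierElement]

variable {β : Type*} (π : FreeMonoid β →* K)

noncomputable def schreierProduct : FreeMonoid ((K ⧸ G) × β) →* G :=
  FreeMonoid.lift fun x => G.schreierElement (π (of x.2)) x.1

noncomputable def cosetPathDFA : DFA ((K ⧸ G) × β) (Option (K ⧸ G)) where
  step s x := open Classical in if s = some (π (of x.2) • x.1) then some x.1 else none
  start := some ((1 : K) : K ⧸ G)
  accept := {some ((1 : K) : K ⧸ G)}

theorem cosetPathDFA_evalFrom_none (l : List ((K ⧸ G) × β)) :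
    (G.cosetPathDFA π).evalFrom none l = none := by
  induction l with
  | nil => rfl
  | cons x l ih => simpa [DFA.evalFrom_cons, cosetPathDFA] using ih

theorem out_mul_schreierProduct_of_evalFrom {l : List ((K ⧸ G) × β)} {s t : K ⧸ G}
    (h : (G.cosetPathDFA π).evalFrom (some s) l = some t) :
    s.out * (G.schreierProduct π (ofList l) : K) =
      π (FreeMonoid.map Prod.snd (ofList l)) * t.out := by
  induction l generalizing s with
  | nil => simp_all [DFA.evalFrom_nil]
  | cons x l ih =>
    by_cases hs : s = π (of x.2) • x.1
    · subst hs
      have hstep : (G.cosetPathDFA π).step (some (π (of x.2) • x.1)) x = some x.1 := if_pos rfl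
      rw [DFA.evalFrom_cons, hstep] at h
      rw [ofList_cons, map_mul, map_mul, Subgroup.coe_mul, map_mul, map_of, mul_assoc, ← ih h,
        ← mul_assoc, ← mul_assoc, mul_out_eq_out_mul_schreierElement]
      rfl
    · have hstep : (G.cosetPathDFA π).step (some s) x = none := if_neg (by simpa using hs)
      rw [DFA.evalFrom_cons, hstep, cosetPathDFA_evalFrom_none] at h
      cases h

noncomputable def cosetAnnotation : List β → List ((K ⧸ G) × β)
  | [] => []
  | b :: v => ((π (ofList v) : K ⧸ G), b) :: cosetAnnotation v

theorem map_snd_cosetAnnotation (v : List β) : (G.cosetAnnotation π v).map Prod.snd = v := by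
  induction v with
  | nil => rfl
  | cons b v ih => simp [cosetAnnotation, ih]

theorem cosetPathDFA_evalFrom_cosetAnnotation (v : List β) :
    (G.cosetPathDFA π).evalFrom (some (π (ofList v) : K ⧸ G)) (G.cosetAnnotation π v) =
      some ((1 : K) : K ⧸ G) := by
  induction v with
  | nil => simp [cosetAnnotation]
  | cons b v ih =>
    have hstep : (G.cosetPathDFA π).step (some (π (ofList (b :: v)) : K ⧸ G))
        ((π (ofList v) : K ⧸ G), b) = some (π (ofList v) : K ⧸ G) :=
      if_pos (by simp [ofList_cons])
    rw [cosetAnnotation, DFA.evalFrom_cons, hstep, ih]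

theorem setOf_map_eq_one_eq_image :
    {w : FreeMonoid β | π w = 1} = FreeMonoid.map Prod.snd ''
      ({l | G.schreierProduct π l = 1} ∩ ((G.cosetPathDFA π).accepts : Set (List _))) := by
  ext w
  constructor
  · intro hw
    have hrun := G.cosetPathDFA_evalFrom_cosetAnnotation π (toList w)
    rw [ofList_toList, hw] at hrun
    refine ⟨ofList (G.cosetAnnotation π (toList w)), ⟨?_, hrun⟩, ?_⟩
    · have hprod := G.out_mul_schreierProduct_of_evalFrom π hrun
      rw [← ofList_map, map_snd_cosetAnnotation, ofList_toList, hw, one_mul, mul_eq_left] at hprod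
      exact Subtype.ext hprod
    · rw [← ofList_map, map_snd_cosetAnnotation, ofList_toList]
  · rintro ⟨l, ⟨hl, hacc⟩, rfl⟩
    have hprod := G.out_mul_schreierProduct_of_evalFrom π (l := toList l) hacc
    rw [ofList_toList, show G.schreierProduct π l = 1 from hl, OneMemClass.coe_one, mul_one,
      right_eq_mul] at hprod
    exact hprod

end Subgroup

theorem LanguageCone.mem_setOf_map_eq_one_of_finiteIndex (𝒞 : LanguageCone) {K : Type}
    [Group K] {G : Subgroup K} [G.FiniteIndex] {α β : Type} [Fintype α] [Fintype β]
    {πG : FreeMonoid α →* G} (hπG : Function.Surjective πG) (h : 𝒞.mem α {w | πG w = 1})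
    (π : FreeMonoid β →* K) : 𝒞.mem β {w | π w = 1} := by
  have : Fintype (K ⧸ G) := Fintype.ofFinite _
  have hmem := 𝒞.image_inter_regular_mem (𝒞.mem_setOf_map_eq_one hπG h (G.schreierProduct π))
    ⟨_, inferInstance, G.cosetPathDFA π, rfl⟩ (FreeMonoid.map Prod.snd)
  exact G.setOf_map_eq_one_eq_image π ▸ hmem

theorem wordProblem_finiteIndex_supergroup_mem_cone_general
    (𝒞 : LanguageCone) (K : Type) [Group K]
    (G : Subgroup K) (hfi : G.FiniteIndex)
    (α : Type) [Fintype α] (c : GeneratorChoice α G)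
    (h : 𝒞.mem α (wordProblem c))
    (β : Type) [Fintype β] (d : GeneratorChoice β K) :
    𝒞.mem β (wordProblem d) :=
  𝒞.mem_setOf_map_eq_one_of_finiteIndex c.surjective h d.π

/-- If the word problem of `G` lies in a cone `𝒞` and `G` is a
finite-index subgroup of a finitely generated group `K`, then the word problem
of `K` lies in `𝒞`. -/
theorem wordProblem_finiteIndex_supergroup_mem_cone
    (𝒞 : LanguageCone) (K : Type) [Group K] (hK : Group.FG K)
    (G : Subgroup K) (hfi : G.FiniteIndex) (hGfg : Group.FG G)
    (α : Type) [Fintype α] (c : GeneratorChoice α G)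
    (h : 𝒞.mem α (wordProblem c))
    (β : Type) [Fintype β] (d : GeneratorChoice β K) :
    𝒞.mem β (wordProblem d) :=
  wordProblem_finiteIndex_supergroup_mem_cone_general 𝒞 K G hfi α c h β d
end

section
/- Let G be a finitely generated nilpotent group that is not virtually abelian, and let 1 = Z₀ ⊆ Z₁ ⊆ Z₂ ⊆ ⋯ be the upper central series of G (so Z_{i+1}/Z_i is the center of G/Z_i). Then there exist g ∈ G and h ∈ Z₂ such that the commutator [g,h] = g⁻¹h⁻¹gh has infinite order. -/
/-!
Suppose every commutator `⁅h, g⁆` with `h ∈ Z₂` has finite order. If the commutators of `z` are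
central then `⁅z ^ n, g⁆ = ⁅z, g⁆ ^ n`, so if they also have finite order and `G` is finitely
generated, some power of `z` commutes with every generator and is central. Applied in `G ⧸ Zᵢ`,
this shows by induction on `i` that every element of `Zᵢ₊₂` has a power in `Zᵢ₊₁`; hence
`G ⧸ Z(G)` is torsion. A finitely generated nilpotent torsion group is finite, so the abelian
subgroup `Z(G)` has finite index.
-/

def IsVirtuallyAbelian (G : Type*) [Group G] : Prop :=
  ∃ H : Subgroup G, H.FiniteIndex ∧ ∀ x y : H, x * y = y * x

open scoped commutatorElement

theorem commutatorElement_pow_left {G : Type*} [Group G] {z g : G} (h : Commute z ⁅z, g⁆)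
    (n : ℕ) : ⁅z ^ n, g⁆ = ⁅z, g⁆ ^ n := by
  induction n with
  | zero => simp
  | succ n ih =>
    have hconj : z ^ n * ⁅z, g⁆ * (z ^ n)⁻¹ = ⁅z, g⁆ := by
      rw [(h.pow_left n).eq, mul_inv_cancel_right]
    calc ⁅z ^ (n + 1), g⁆ = z ^ n * ⁅z, g⁆ * (z ^ n)⁻¹ * ⁅z ^ n, g⁆ := by
          simp only [commutatorElement_def]; group
      _ = ⁅z, g⁆ ^ (n + 1) := by rw [hconj, ih, pow_succ']

theorem exists_pow_mem_center_of_commutatorElement {G : Type*} [Group G] [Group.FG G] {z : G}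
    (hcen : ∀ g : G, ⁅z, g⁆ ∈ Subgroup.center G) (hfin : ∀ g : G, IsOfFinOrder ⁅z, g⁆) :
    ∃ n, 0 < n ∧ z ^ n ∈ Subgroup.center G := by
  obtain ⟨S, hS⟩ := Group.fg_def.mp ‹Group.FG G›
  refine ⟨∏ s ∈ S, orderOf ⁅z, s⁆, Finset.prod_pos fun s _ ↦ (hfin s).orderOf_pos, ?_⟩
  have hle : Subgroup.closure (S : Set G) ≤
      Subgroup.centralizer {z ^ ∏ s ∈ S, orderOf ⁅z, s⁆} := by
    refine Subgroup.closure_le _ |>.mpr fun s hs ↦ Subgroup.mem_centralizer_singleton_iff.mpr ?_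
    have hcomm : Commute z ⁅z, s⁆ := Subgroup.mem_center_iff.mp (hcen s) z
    rw [eq_comm, ← commutatorElement_eq_one_iff_mul_comm, commutatorElement_pow_left hcomm,
      ← orderOf_dvd_iff_pow_eq_one]
    exact Finset.dvd_prod_of_mem _ hs
  rwa [hS, top_le_iff, Subgroup.centralizer_eq_top_iff_subset, Set.singleton_subset_iff] at hle

theorem QuotientGroup.isOfFinOrder_mk_iff {G : Type*} [Group G] {N : Subgroup G} [N.Normal]
    {x : G} : IsOfFinOrder (x : G ⧸ N) ↔ ∃ n, 0 < n ∧ x ^ n ∈ N := by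
  simp only [isOfFinOrder_iff_pow_eq_one, ← QuotientGroup.mk_pow, QuotientGroup.eq_one_iff]

theorem exists_pow_mem_upperCentralSeriesStep {G : Type*} [Group G] [Group.FG G]
    {N : Subgroup G} [N.Normal] {z : G}
    (hcen : ∀ g : G, ⁅z, g⁆ ∈ Subgroup.upperCentralSeriesStep N)
    (hfin : ∀ g : G, IsOfFinOrder ((⁅z, g⁆ : G) : G ⧸ N)) :
    ∃ n, 0 < n ∧ z ^ n ∈ Subgroup.upperCentralSeriesStep N := by
  simp only [Subgroup.upperCentralSeriesStep_eq_comap_center] at hcen ⊢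
  exact exists_pow_mem_center_of_commutatorElement (z := (z : G ⧸ N))
    (QuotientGroup.forall_mk.mpr hcen) (QuotientGroup.forall_mk.mpr hfin)

section TorsionCommutators

variable {G : Type*} [Group G] [Group.FG G]
  (hZ₂ : ∀ h ∈ Subgroup.upperCentralSeries G 2, ∀ g : G, IsOfFinOrder ⁅h, g⁆)
include hZ₂

theorem isOfFinOrder_mk_upperCentralSeries_of_torsion_commutators (i : ℕ) {x : G}
    (hx : x ∈ Subgroup.upperCentralSeries G (i + 2)) :
    IsOfFinOrder (x : G ⧸ Subgroup.upperCentralSeries G (i + 1)) := by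
  induction i generalizing x with
  | zero =>
    exact QuotientGroup.isOfFinOrder_mk_iff.mpr <|
      exists_pow_mem_upperCentralSeriesStep (N := Subgroup.upperCentralSeries G 0) hx
        fun g ↦ (QuotientGroup.mk' _).isOfFinOrder (hZ₂ x hx g)
  | succ i ih =>
    exact QuotientGroup.isOfFinOrder_mk_iff.mpr <|
      exists_pow_mem_upperCentralSeriesStep (N := Subgroup.upperCentralSeries G (i + 1)) hx
        fun g ↦ ih (hx g)

theorem isOfFinOrder_mk_center_of_torsion_commutators (i : ℕ) {x : G}
    (hx : x ∈ Subgroup.upperCentralSeries G (i + 1)) :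
    IsOfFinOrder (x : G ⧸ Subgroup.center G) := by
  induction i generalizing x with
  | zero =>
    rw [Subgroup.upperCentralSeries_one] at hx
    exact QuotientGroup.isOfFinOrder_mk_iff.mpr ⟨1, one_pos, by rwa [pow_one]⟩
  | succ i ih =>
    obtain ⟨n, hn, hxn⟩ := QuotientGroup.isOfFinOrder_mk_iff.mp
      (isOfFinOrder_mk_upperCentralSeries_of_torsion_commutators hZ₂ i hx)
    have hxn' := ih hxn
    rw [QuotientGroup.mk_pow] at hxn'
    exact hxn'.of_pow hn.ne'

theorem isMulTorsion_quotient_center_of_torsion_commutators [Group.IsNilpotent G] :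
    IsMulTorsion (G ⧸ Subgroup.center G) := by
  obtain ⟨n, hn⟩ := Group.IsNilpotent.nilpotent (G := G)
  refine QuotientGroup.forall_mk.mpr fun x ↦ ?_
  have hx : x ∈ Subgroup.upperCentralSeries G (n + 1) :=
    Subgroup.upperCentralSeries_mono G n.le_succ (hn ▸ Subgroup.mem_top x)
  exact isOfFinOrder_mk_center_of_torsion_commutators hZ₂ n hx

end TorsionCommutators

open scoped IsMulCommutative in
theorem finite_of_isNilpotent_of_isMulTorsion {G : Type*} [Group G] [Group.IsNilpotent G]
    [Group.FG G] (ht : IsMulTorsion G) : Finite G := by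
  refine Group.nilpotent_center_quotient_ind
    (P := fun G _ _ ↦ ∀ [Group.FG G], IsMulTorsion G → Finite G) G
    (fun _ _ _ _ _ ↦ inferInstance) (fun G _ _ ih _ ht ↦ ?_) ht
  have : Finite (G ⧸ Subgroup.center G) := ih (ht.of_surjective (QuotientGroup.mk'_surjective _))
  have : (Subgroup.center G).FiniteIndex := Subgroup.finiteIndex_of_finite_quotient
  have : Finite (Subgroup.center G) := CommGroup.finite_of_fg_isMulTorsion _ (ht.subgroup _)
  exact Finite.of_subgroup_quotient (Subgroup.center G)

theorem isVirtuallyAbelian_of_finite_quotient_center {G : Type*} [Group G]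
    [Finite (G ⧸ Subgroup.center G)] : IsVirtuallyAbelian G :=
  ⟨Subgroup.center G, Subgroup.finiteIndex_of_finite_quotient,
    fun x y ↦ Subtype.ext (Subgroup.mem_center_iff.mp y.2 x)⟩

/-- In a finitely generated nilpotent group which is not
virtually abelian there are `g ∈ G` and `h ∈ Z₂` (the second term of the upper
central series) whose commutator `g⁻¹h⁻¹gh` has infinite order. -/
theorem exists_commutator_infinite_order_of_nilpotent_not_virtuallyAbelian
    (G : Type) [Group G] (hfg : Group.FG G) [Group.IsNilpotent G]
    (hna : ¬ IsVirtuallyAbelian G) :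
    ∃ (g h : G), h ∈ upperCentralSeries G 2 ∧ ¬ IsOfFinOrder (g⁻¹ * h⁻¹ * g * h) := by
  by_contra! hfin
  have hZ₂ : ∀ h ∈ Subgroup.upperCentralSeries G 2, ∀ g : G, IsOfFinOrder ⁅h, g⁆ := by
    intro h hh g
    have hgh : IsOfFinOrder ⁅g, h⁆ := by
      simpa [commutatorElement_def] using hfin g⁻¹ h⁻¹ (inv_mem hh)
    rwa [← commutatorElement_inv, isOfFinOrder_inv_iff]
  have : Finite (G ⧸ Subgroup.center G) := finite_of_isNilpotent_of_isMulTorsion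
    (isMulTorsion_quotient_center_of_torsion_commutators hZ₂)
  exact hna isVirtuallyAbelian_of_finite_quotient_center
end

section
/- The set S = {(m, m·n) : m, n ∈ ℕ} ⊆ ℕ² is not semilinear. -/
/-- A subset of a commutative monoid is *linear* if it is a translate of a
finitely generated submonoid. -/
def IsLinearSet' {M : Type*} [AddCommMonoid M] (S : Set M) : Prop :=
  ∃ (v₀ : M) (F : Finset M),
    S = (fun v => v₀ + v) '' (AddSubmonoid.closure (F : Set M) : Set M)

/-- A subset is *semilinear* if it is a finite union of linear sets. -/
def IsSemilinearSet' {M : Type*} [AddCommMonoid M] (S : Set M) : Prop :=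
  ∃ (n : ℕ) (f : Fin n → Set M), (∀ i, IsLinearSet' (f i)) ∧ S = ⋃ i, f i

/-
A linear set `v₀ + ⟨F⟩` containing a point `(m, m²)` with `m > v₀.1` contains it as `v₀ + u`
with `u.1 > 0`, and then contains every point `(m', m'²) + k • u` of the rays through its other
diagonal points. Inside the divisibility set `{(a, b) : a ∣ b}` this forces
`m' + k u.1 ∣ m'² + k u.2` for all `k`, hence `u.1 m' = u.2`, so a linear subset of the
divisibility set contains only finitely many diagonal points `(m, m²)`, and finitely many linear
sets cannot cover all of them.
-/

theorem setOf_exists_eq_mul_eq_setOf_dvd :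
    {p : ℕ × ℕ | ∃ m n : ℕ, p = (m, m * n)} = {p | p.1 ∣ p.2} := by
  ext ⟨a, b⟩
  simp only [Set.mem_ofPred_eq, Prod.mk.injEq, Dvd.dvd]
  constructor
  · rintro ⟨m, n, rfl, rfl⟩
    exact ⟨n, rfl⟩
  · rintro ⟨n, rfl⟩
    exact ⟨a, n, rfl, rfl⟩

-- `a + k w₁` divides `w₁ (b + k w₂)` and `w₂ (a + k w₁)`, which differ by `w₁ b - w₂ a`, and for
-- large `k` it exceeds both `w₁ b` and `w₂ a`.
theorem Nat.mul_eq_mul_of_forall_dvd_add_mul {a b w₁ w₂ : ℕ} (hw : 0 < w₁)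
    (h : ∀ k, a + k * w₁ ∣ b + k * w₂) : w₁ * b = w₂ * a := by
  set k := w₁ * b + w₂ * a + 1
  have hb : w₁ * b + k * (w₁ * w₂) ≡ 0 [MOD a + k * w₁] :=
    Nat.modEq_zero_iff_dvd.2 <| by simpa only [mul_add, mul_left_comm w₁] using (h k).mul_left w₁
  have ha : w₂ * a + k * (w₁ * w₂) ≡ 0 [MOD a + k * w₁] :=
    Nat.modEq_zero_iff_dvd.2 ⟨w₂, by ring⟩
  have hk : k ≤ a + k * w₁ := by nlinarith
  exact (Nat.ModEq.add_right_cancel' _ (hb.trans ha.symm)).eq_of_lt_of_lt (by omega) (by omega)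

theorem add_nsmul_mem_image_add {M : Type*} [AddCommMonoid M] {P : AddSubmonoid M} {v₀ p u : M}
    (hp : p ∈ (v₀ + ·) '' (P : Set M)) (hu : u ∈ P) (k : ℕ) :
    p + k • u ∈ (v₀ + ·) '' (P : Set M) := by
  obtain ⟨w, hw, rfl⟩ := hp
  exact ⟨w + k • u, add_mem hw (nsmul_mem hu k), (add_assoc _ _ _).symm⟩

theorem mul_eq_of_forall_add_nsmul_mem_setOf_dvd {m : ℕ} {u : ℕ × ℕ} (hm : 0 < m) (hu : 0 < u.1)
    (h : ∀ k : ℕ, (m, m * m) + k • u ∈ {p : ℕ × ℕ | p.1 ∣ p.2}) : u.1 * m = u.2 := by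
  have hdvd : ∀ k, m + k * u.1 ∣ m * m + k * u.2 := by
    simpa [mul_comm] using h
  have := Nat.mul_eq_mul_of_forall_dvd_add_mul hu hdvd
  rw [← mul_assoc] at this
  exact Nat.eq_of_mul_eq_mul_right hm this

theorem IsLinearSet'.finite_setOf_mk_mul_self_mem {L : Set (ℕ × ℕ)} (hL : IsLinearSet' L)
    (hsub : L ⊆ {p | p.1 ∣ p.2}) : {m | (m, m * m) ∈ L}.Finite := by
  obtain ⟨v₀, F, rfl⟩ := hL
  by_contra hinf
  obtain ⟨m₁, hm₁, hm₁_pos⟩ := (Set.not_finite.mp hinf).exists_gt 0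
  obtain ⟨m₂, hm₂, hm₂_gt⟩ := (Set.not_finite.mp hinf).exists_gt (m₁ + v₀.1)
  have ⟨u, hu, hu_eq⟩ := hm₂
  have hu_pos : 0 < u.1 := by
    have := congrArg Prod.fst hu_eq
    simp only [Prod.fst_add] at this
    omega
  have slope {m} (hm : 0 < m) (hmL : (m, m * m) ∈ _) : u.1 * m = u.2 :=
    mul_eq_of_forall_add_nsmul_mem_setOf_dvd hm hu_pos
      fun k ↦ hsub (add_nsmul_mem_image_add hmL hu k)
  have hm : m₁ = m₂ :=
    Nat.eq_of_mul_eq_mul_left hu_pos ((slope hm₁_pos hm₁).trans (slope (by omega) hm₂).symm)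
  omega

/-- The set `{(m, m·n) : m, n ∈ ℕ} ⊆ ℕ²` is not semilinear. -/
theorem not_isSemilinearSet_graph_mul :
    ¬ IsSemilinearSet' {p : ℕ × ℕ | ∃ m n : ℕ, p = (m, m * n)} := by
  rw [setOf_exists_eq_mul_eq_setOf_dvd]
  rintro ⟨n, f, hlin, hS⟩
  have hfinite : ∀ i, {m | (m, m * m) ∈ f i}.Finite := fun i ↦
    (hlin i).finite_setOf_mk_mul_self_mem (hS ▸ Set.subset_iUnion f i)
  have hcover : {m | (m, m * m) ∈ ⋃ i, f i} = Set.univ :=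
    Set.eq_univ_of_forall fun m ↦ hS ▸ dvd_mul_right m m
  apply Set.infinite_univ (α := ℕ)
  rw [← hcover]
  simpa only [Set.mem_iUnion, Set.ofPred_exists] using Set.finite_iUnion hfinite
end

section
/- Let BS(1,2) be the Baumslag–Solitar group presented as ⟨a, t | t·a·t⁻¹·a⁻²⟩. Then for all natural numbers m, k, l, the element t^m · a · t^{-k} · a^{-l} equals the identity in BS(1,2) if and only if m = k and l = 2^m. -/
/-- The single relator `t·a·t⁻¹·a⁻²` of the Baumslag–Solitar group `BS(1,2)`,
where `a = FreeGroup.of 0` and `t = FreeGroup.of 1`. -/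
def bsRelators : Set (FreeGroup (Fin 2)) :=
  {FreeGroup.of 1 * FreeGroup.of 0 * (FreeGroup.of 1)⁻¹ *
    ((FreeGroup.of 0)⁻¹ * (FreeGroup.of 0)⁻¹)}

/-- The Baumslag–Solitar group `BS(1,2) = ⟨a, t | t·a·t⁻¹·a⁻²⟩`. -/
abbrev BS12 : Type := PresentedGroup bsRelators

/-!
Conjugating by `t` squares `a`, so `tᵐ a t⁻ᵐ = a^(2ᵐ)` and the word is trivial when `m = k`,
`l = 2ᵐ`. Conversely, `a ↦ (x ↦ x + 1)`, `t ↦ (x ↦ 2x)` is an action of `BS(1,2)` on `ℚ`, under which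
`tᵐ a = aˡ tᵏ` reads `2ᵐ (x + 1) = 2ᵏ x + l`; comparing `x = 0` and `x = -1` gives `l = 2ᵐ = 2ᵏ`.
-/

theorem SemiconjBy.pow_left_of_pow_right {M : Type*} [Monoid M] {t a : M} {n : ℕ}
    (h : SemiconjBy t a (a ^ n)) (m : ℕ) : SemiconjBy (t ^ m) a (a ^ n ^ m) := by
  induction m with
  | zero => simp
  | succ m ih =>
    rw [pow_succ' t, pow_succ' n, pow_mul]
    exact (h.pow_right _).mul_left ih

namespace BS12

abbrev a : BS12 := PresentedGroup.of 0

abbrev t : BS12 := PresentedGroup.of 1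

theorem semiconjBy_t_a : SemiconjBy t a (a ^ 2) := by
  have hrel : t * a * t⁻¹ * (a⁻¹ * a⁻¹) = 1 := PresentedGroup.one_of_mem rfl
  rw [SemiconjBy, ← mul_inv_eq_one, pow_two]
  simpa only [mul_inv_rev, mul_assoc] using hrel

noncomputable def affineAction : BS12 →* Equiv.Perm ℚ :=
  PresentedGroup.toGroup (f := ![Equiv.addRight 1, Equiv.mulLeft₀ 2 two_ne_zero]) <| by
    rintro r rfl
    have hcomm : Equiv.mulLeft₀ (2 : ℚ) two_ne_zero * Equiv.addRight 1 =
        Equiv.addRight 1 * Equiv.addRight 1 * Equiv.mulLeft₀ 2 two_ne_zero := by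
      ext x
      simp only [Equiv.Perm.mul_apply, Equiv.mulLeft₀_apply, Equiv.coe_addRight]
      ring
    simp only [map_mul, map_inv, FreeGroup.lift_apply_of, Matrix.cons_val_zero,
      Matrix.cons_val_one, hcomm]
    group

theorem affineAction_a_apply (x : ℚ) : affineAction a x = x + 1 := rfl

theorem affineAction_t_apply (x : ℚ) : affineAction t x = 2 * x := rfl

theorem affineAction_a_pow_apply (n : ℕ) (x : ℚ) : affineAction (a ^ n) x = x + n := by
  induction n generalizing x with
  | zero => simp
  | succ n ih =>
    rw [pow_succ', map_mul, Equiv.Perm.mul_apply, ih, affineAction_a_apply]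
    push_cast
    ring

theorem affineAction_t_pow_apply (n : ℕ) (x : ℚ) : affineAction (t ^ n) x = 2 ^ n * x := by
  induction n generalizing x with
  | zero => simp
  | succ n ih =>
    rw [pow_succ', map_mul, Equiv.Perm.mul_apply, ih, affineAction_t_apply]
    ring

theorem eq_and_eq_two_pow_of_t_pow_mul_a_eq {m k l : ℕ} (h : t ^ m * a = a ^ l * t ^ k) :
    m = k ∧ l = 2 ^ m := by
  have hx (x : ℚ) : 2 ^ m * (x + 1) = 2 ^ k * x + l := by
    have := congr(affineAction $h x)
    rwa [map_mul, map_mul, Equiv.Perm.mul_apply, Equiv.Perm.mul_apply, affineAction_a_apply,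
      affineAction_a_pow_apply, affineAction_t_pow_apply, affineAction_t_pow_apply] at this
  have hl : (l : ℚ) = 2 ^ m := by simpa using (hx 0).symm
  have hk : (l : ℚ) = 2 ^ k := by linarith [hx (-1)]
  exact ⟨Nat.pow_right_injective le_rfl (by exact_mod_cast hl.symm.trans hk), by exact_mod_cast hl⟩

end BS12

open BS12 in
/-- In `BS(1,2)`, the element `tᵐ·a·t⁻ᵏ·a⁻ˡ` is trivial if and
only if `m = k` and `l = 2ᵐ`. -/
theorem bs12_word_eq_one_iff (m k l : ℕ) :
    (PresentedGroup.of 1 : BS12) ^ m * PresentedGroup.of 0 *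
      ((PresentedGroup.of 1 : BS12)⁻¹) ^ k * ((PresentedGroup.of 0 : BS12)⁻¹) ^ l = 1 ↔
    m = k ∧ l = 2 ^ m := by
  rw [inv_pow, inv_pow, mul_inv_eq_one, mul_inv_eq_iff_eq_mul]
  constructor
  · exact eq_and_eq_two_pow_of_t_pow_mul_a_eq
  · rintro ⟨rfl, rfl⟩
    exact semiconjBy_t_a.pow_left_of_pow_right m
end

section
/- Let S ⊆ ℕ² be a semilinear set such that every (n, m) ∈ S satisfies m ≥ 2^n. Then the set of first coordinates {n : ∃ m, (n, m) ∈ S} is finite. -/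
/-!
On a linear set `v + ⟨F⟩` the first coordinate is constant unless some generator `g ∈ F` has
`g.1 ≠ 0`. In that case the ray `v + k • g` lies in the set, and along it the first coordinate
grows at least like `k` while the second grows only linearly in `k`, so `2 ^ p.1 ≤ p.2` fails
for large `k`. A semilinear set is a finite union of linear sets.
-/

theorem Nat.exists_add_mul_lt_two_pow (a b : ℕ) : ∃ k, a + k * b < 2 ^ k := by
  -- `2 ^ (2 * c) > c * c ≥ c * (a + 2 * b + 1) > a + 2 * c * b`
  set c := a + 2 * b + 1 with hc_def
  refine ⟨2 * c, ?_⟩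
  have hc : c < 2 ^ c := Nat.lt_two_pow_self
  calc a + 2 * c * b < c * c := by rw [hc_def]; nlinarith
    _ ≤ 2 ^ c * 2 ^ c := Nat.mul_le_mul hc.le hc.le
    _ = 2 ^ (2 * c) := by rw [← pow_add, two_mul]

theorem exists_snd_lt_two_pow_fst_add_nsmul (v g : ℕ × ℕ) (hg : g.1 ≠ 0) :
    ∃ k : ℕ, (v + k • g).2 < 2 ^ (v + k • g).1 := by
  obtain ⟨k, hk⟩ := Nat.exists_add_mul_lt_two_pow v.2 g.2
  refine ⟨k, ?_⟩
  simp only [Prod.fst_add, Prod.snd_add, Prod.smul_fst, Prod.smul_snd, smul_eq_mul]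
  calc v.2 + k * g.2 < 2 ^ k := hk
    _ ≤ 2 ^ (v.1 + k * g.1) :=
      Nat.pow_le_pow_right two_pos
        (le_add_left (Nat.le_mul_of_pos_right k (Nat.pos_of_ne_zero hg)))

theorem IsLinearSet'.finite_fst_image_of_two_pow_le {L : Set (ℕ × ℕ)} (hL : IsLinearSet' L)
    (h : ∀ p ∈ L, 2 ^ p.1 ≤ p.2) : (Prod.fst '' L).Finite := by
  obtain ⟨v, F, rfl⟩ := hL
  by_cases hF : ∀ g ∈ F, g.1 = 0
  · have hker : AddSubmonoid.closure (F : Set (ℕ × ℕ)) ≤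
        AddMonoidHom.mker (AddMonoidHom.fst ℕ ℕ) := AddSubmonoid.closure_le.2 hF
    refine (Set.finite_singleton v.1).subset ?_
    rintro _ ⟨_, ⟨x, hx, rfl⟩, rfl⟩
    simp [show x.1 = 0 from hker hx]
  · push Not at hF
    obtain ⟨g, hgF, hg⟩ := hF
    obtain ⟨k, hk⟩ := exists_snd_lt_two_pow_fst_add_nsmul v g hg
    have hmem : k • g ∈ AddSubmonoid.closure (F : Set (ℕ × ℕ)) :=
      AddSubmonoid.nsmul_mem _ (AddSubmonoid.subset_closure hgF) k
    exact absurd (h _ ⟨_, hmem, rfl⟩) hk.not_ge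

/-- A semilinear subset of `ℕ²` lying on or above the graph of
`n ↦ 2ⁿ` has only finitely many first coordinates. -/
theorem finite_first_coords_of_semilinear_above_exponential
    (S : Set (ℕ × ℕ)) (hS : IsSemilinearSet' S)
    (h : ∀ p ∈ S, 2 ^ p.1 ≤ p.2) :
    {n : ℕ | ∃ m : ℕ, (n, m) ∈ S}.Finite := by
  obtain ⟨n, f, hlin, rfl⟩ := hS
  have hfst : {k : ℕ | ∃ m : ℕ, (k, m) ∈ ⋃ i, f i} = ⋃ i, Prod.fst '' f i := by
    ext k
    simpa using exists_comm
  rw [hfst]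
  exact Set.finite_iUnion fun i =>
    (hlin i).finite_fst_image_of_two_pow_le fun p hp => h p (Set.mem_iUnion_of_mem i hp)
end

section
/- In the right-angled Artin group A(P₄) = ⟨a, b, c, d | [a,b], [b,c], [c,d]⟩, let x = a·b⁻¹, y = b·c⁻¹, z = c·d⁻¹, and for i ≥ 1 set uᵢ = x·y^{2i-1}·z⁻¹ and vᵢ = x⁻¹·y^{2i-1}·z. Then for every n ≥ 1: (a·d)^n·(a⁻¹·d⁻¹)^n = u₁·y⁻²·u₂·y⁻⁴·⋯·y^{-(2n-2)}·uₙ·y^{-2n}·vₙ·y^{-(2n-2)}·⋯·y⁻²·v₁. -/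
/-!
Since `b` and `c` commute, `y ^ k = b ^ k c ^ (-k)`; together with the commutations `a b = b a`
and `c d = d c` this turns each factor into a conjugate by a power of `b`:
`uᵢ y ^ (-2i) = b ^ (2i-2) (a d) b ^ (-2i)` and `vᵢ y ^ (-(2i-2)) = b ^ (2i) (a⁻¹ d⁻¹) b ^ (-(2i-2))`.
Both products therefore telescope, to `(a d) ^ n b ^ (-2n)` and `b ^ (2n) (a⁻¹ d⁻¹) ^ n`.
-/

/-- Relators `[a,b], [b,c], [c,d]` (with `[v,w] = v⁻¹w⁻¹vw`) of the right-angled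
Artin group of the path `P₄`, on generators `a = 0, b = 1, c = 2, d = 3`. -/
def P4Relators : Set (FreeGroup (Fin 4)) :=
  { (FreeGroup.of 0)⁻¹ * (FreeGroup.of 1)⁻¹ * FreeGroup.of 0 * FreeGroup.of 1,
    (FreeGroup.of 1)⁻¹ * (FreeGroup.of 2)⁻¹ * FreeGroup.of 1 * FreeGroup.of 2,
    (FreeGroup.of 2)⁻¹ * (FreeGroup.of 3)⁻¹ * FreeGroup.of 2 * FreeGroup.of 3 }

/-- The right-angled Artin group `A(P₄) = ⟨a,b,c,d ∣ [a,b],[b,c],[c,d]⟩`. -/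
abbrev AP4 : Type := PresentedGroup P4Relators

/-- The generator `a` of `A(P₄)`. -/
def ap4a : AP4 := PresentedGroup.of 0
/-- The generator `b` of `A(P₄)`. -/
def ap4b : AP4 := PresentedGroup.of 1
/-- The generator `c` of `A(P₄)`. -/
def ap4c : AP4 := PresentedGroup.of 2
/-- The generator `d` of `A(P₄)`. -/
def ap4d : AP4 := PresentedGroup.of 3

/-- `x = a·b⁻¹`. -/
def ap4x : AP4 := ap4a * ap4b⁻¹
/-- `y = b·c⁻¹`. -/
def ap4y : AP4 := ap4b * ap4c⁻¹
/-- `z = c·d⁻¹`. -/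
def ap4z : AP4 := ap4c * ap4d⁻¹

/-- `uᵢ = x·y^(2i-1)·z⁻¹`. -/
def ap4u (i : ℕ) : AP4 := ap4x * ap4y ^ (2 * (i : ℤ) - 1) * ap4z⁻¹
/-- `vᵢ = x⁻¹·y^(2i-1)·z`. -/
def ap4v (i : ℕ) : AP4 := ap4x⁻¹ * ap4y ^ (2 * (i : ℤ) - 1) * ap4z

theorem PresentedGroup.commute_of_mem {α : Type*} {rels : Set (FreeGroup α)} {i j : α}
    (h : (FreeGroup.of i)⁻¹ * (FreeGroup.of j)⁻¹ * FreeGroup.of i * FreeGroup.of j ∈ rels) :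
    Commute (PresentedGroup.of (rels := rels) i) (PresentedGroup.of j) := by
  have hrel : (PresentedGroup.of (rels := rels) i)⁻¹ * (PresentedGroup.of j)⁻¹ *
      PresentedGroup.of i * PresentedGroup.of j = 1 :=
    PresentedGroup.one_of_mem h
  rw [← Commute.inv_inv_iff, ← commutatorElement_eq_one_iff_commute, commutatorElement_def,
    inv_inv, inv_inv, hrel]

namespace List

variable {G : Type*} [Group G]

theorem prod_range_map_mul_mul_inv (f : ℕ → G) (g : G) (n : ℕ) :
    ((range n).map fun k => f k * g * (f (k + 1))⁻¹).prod = f 0 * g ^ n * (f n)⁻¹ := by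
  induction n with
  | zero => simp
  | succ n ih => rw [range_succ, map_append, prod_append, ih]; simp [pow_succ, mul_assoc]

theorem prod_reverse_range_map_mul_mul_inv (f : ℕ → G) (g : G) (n : ℕ) :
    ((range n).reverse.map fun k => f (k + 1) * g * (f k)⁻¹).prod = f n * g ^ n * (f 0)⁻¹ := by
  induction n with
  | zero => simp
  | succ n ih =>
    rw [range_succ, reverse_append, map_append, prod_append, ih]; simp [pow_succ', mul_assoc]

end List

section CommutingPath

variable {G : Type*} [Group G] {a b c d : G}

theorem Commute.mul_inv_zpow (h : Commute b c) (k : ℤ) : (b * c⁻¹) ^ k = b ^ k * (c ^ k)⁻¹ := by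
  rw [h.inv_right.mul_zpow, inv_zpow]

theorem Commute.mul_inv_zpow' (h : Commute b c) (k : ℤ) : (b * c⁻¹) ^ k = (c ^ k)⁻¹ * b ^ k := by
  rw [h.mul_inv_zpow, (h.zpow_zpow k k).inv_right.eq]

theorem commute_path_u_mul_zpow (hab : Commute a b) (hbc : Commute b c) (hcd : Commute c d)
    (m : ℤ) :
    a * b⁻¹ * (b * c⁻¹) ^ (m + 1) * (c * d⁻¹)⁻¹ * (b * c⁻¹) ^ (-(m + 2)) =
      b ^ m * (a * d) * (b ^ (m + 2))⁻¹ := by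
  calc _ = a * b ^ m * ((c ^ (m + 1))⁻¹ * d * c ^ (m + 1)) * (b ^ (m + 2))⁻¹ := by
        rw [hbc.mul_inv_zpow (m + 1), hbc.mul_inv_zpow' (-(m + 2))]; group
    _ = a * b ^ m * d * (b ^ (m + 2))⁻¹ := by rw [(hcd.zpow_left (m + 1)).inv_mul_cancel]
    _ = _ := by rw [(hab.zpow_right m).eq]; group

theorem commute_path_v_mul_zpow (hab : Commute a b) (hbc : Commute b c) (hcd : Commute c d)
    (m : ℤ) :
    (a * b⁻¹)⁻¹ * (b * c⁻¹) ^ (m + 1) * (c * d⁻¹) * (b * c⁻¹) ^ (-m) =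
      b ^ (m + 2) * (a⁻¹ * d⁻¹) * (b ^ m)⁻¹ := by
  calc _ = b * (a⁻¹ * b ^ (m + 1)) * ((c ^ m)⁻¹ * d⁻¹ * c ^ m) * (b ^ m)⁻¹ := by
        rw [hbc.mul_inv_zpow (m + 1), hbc.mul_inv_zpow' (-m)]; group
    _ = b * (b ^ (m + 1) * a⁻¹) * d⁻¹ * (b ^ m)⁻¹ := by
        rw [(hab.zpow_right (m + 1)).inv_left.eq, (hcd.zpow_left m).inv_right.inv_mul_cancel]
    _ = _ := by group

end CommutingPath

theorem ap4_commute_ab : Commute ap4a ap4b :=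
  PresentedGroup.commute_of_mem (by simp [P4Relators])

theorem ap4_commute_bc : Commute ap4b ap4c :=
  PresentedGroup.commute_of_mem (by simp [P4Relators])

theorem ap4_commute_cd : Commute ap4c ap4d :=
  PresentedGroup.commute_of_mem (by simp [P4Relators])

theorem ap4u_succ_mul_ap4y_zpow (i : ℕ) :
    ap4u (i + 1) * ap4y ^ (-(2 * ((i : ℤ) + 1))) =
      ap4b ^ (2 * (i : ℤ)) * (ap4a * ap4d) * (ap4b ^ (2 * ((i + 1 : ℕ) : ℤ)))⁻¹ := by
  unfold ap4u ap4x ap4y ap4z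
  convert commute_path_u_mul_zpow ap4_commute_ab ap4_commute_bc ap4_commute_cd (2 * i)
    using 5 <;> push_cast <;> ring

theorem ap4v_succ_mul_ap4y_zpow (i : ℕ) :
    ap4v (i + 1) * ap4y ^ (-(2 * (i : ℤ))) =
      ap4b ^ (2 * ((i + 1 : ℕ) : ℤ)) * (ap4a⁻¹ * ap4d⁻¹) * (ap4b ^ (2 * (i : ℤ)))⁻¹ := by
  unfold ap4v ap4x ap4y ap4z
  convert commute_path_v_mul_zpow ap4_commute_ab ap4_commute_bc ap4_commute_cd (2 * i)
    using 5 <;> push_cast <;> ring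

theorem ap4_key_product_identity_general (n : ℕ) :
    (ap4a * ap4d) ^ n * (ap4a⁻¹ * ap4d⁻¹) ^ n =
      (((List.range n).map fun i => ap4u (i + 1) * ap4y ^ (-(2 * ((i : ℤ) + 1)))).prod) *
      (((List.range n).reverse.map fun i => ap4v (i + 1) * ap4y ^ (-(2 * (i : ℤ)))).prod) := by
  simp only [ap4u_succ_mul_ap4y_zpow, ap4v_succ_mul_ap4y_zpow]
  rw [List.prod_range_map_mul_mul_inv (fun i : ℕ => ap4b ^ (2 * (i : ℤ))),
    List.prod_reverse_range_map_mul_mul_inv (fun i : ℕ => ap4b ^ (2 * (i : ℤ)))]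
  group

/-- In `A(P₄)`, for every `n ≥ 1`,
`(a·d)ⁿ·(a⁻¹·d⁻¹)ⁿ = u₁·y⁻²·u₂·y⁻⁴ ⋯ y^(-(2n-2))·uₙ·y^(-2n)·vₙ·y^(-(2n-2)) ⋯ y⁻²·v₁`. -/
theorem ap4_key_product_identity (n : ℕ) (hn : 1 ≤ n) :
    (ap4a * ap4d) ^ n * (ap4a⁻¹ * ap4d⁻¹) ^ n =
      (((List.range n).map fun i => ap4u (i + 1) * ap4y ^ (-(2 * ((i : ℤ) + 1)))).prod) *
      (((List.range n).reverse.map fun i => ap4v (i + 1) * ap4y ^ (-(2 * (i : ℤ)))).prod) :=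
  ap4_key_product_identity_general n
end

section
/- Let F be the free group on three generators x, y, z. For i ≥ 1 set uᵢ = x·y^{2i-1}·z⁻¹ and vᵢ = x⁻¹·y^{2i-1}·z, and for n ≥ 1 let wₙ = u₁·y⁻²·u₂·y⁻⁴·⋯·y^{-(2n-2)}·uₙ·y^{-2n}·vₙ·y^{-(2n-2)}·⋯·y⁻²·v₁ ∈ F. Then every word over the letters x, y, z, x⁻¹, y⁻¹, z⁻¹ (i.e., every list of generators and their inverses) whose product in F equals wₙ contains at least 2n² occurrences of the letter y (counting only positive occurrences of y, not occurrences of y⁻¹). -/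
/-!
Free reduction only deletes letters, so a word representing `g` contains every letter at least
as often as the reduced word of `g`. Writing `wₙ` out letter by letter as blocks
`x^{±1} y^{2i-1} z^{∓1} y^{-m}` gives a reduced word: inside a block adjacent letters involve
different generators or coincide, and every block starts with `x` and ends with `z` or `y⁻¹`.
That word contains `y` exactly `2 ∑_{i=1}^n (2i-1) = 2n²` times.
-/

/-- The free group on three generators `x = 0`, `y = 1`, `z = 2`. -/
abbrev F3 : Type := FreeGroup (Fin 3)

/-- `uᵢ = x·y^(2i-1)·z⁻¹` in the free group on `x, y, z`. -/
def f3u (i : ℕ) : F3 := FreeGroup.of 0 * FreeGroup.of 1 ^ (2 * (i : ℤ) - 1) * (FreeGroup.of 2)⁻¹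
/-- `vᵢ = x⁻¹·y^(2i-1)·z` in the free group on `x, y, z`. -/
def f3v (i : ℕ) : F3 := (FreeGroup.of 0)⁻¹ * FreeGroup.of 1 ^ (2 * (i : ℤ) - 1) * FreeGroup.of 2

/-- `wₙ = u₁·y⁻²·u₂·y⁻⁴ ⋯ y^(-(2n-2))·uₙ·y^(-2n)·vₙ·y^(-(2n-2)) ⋯ y⁻²·v₁`. -/
def f3w (n : ℕ) : F3 :=
  (((List.range n).map fun i => f3u (i + 1) * FreeGroup.of 1 ^ (-(2 * ((i : ℤ) + 1)))).prod) *
  (((List.range n).reverse.map fun i => f3v (i + 1) * FreeGroup.of 1 ^ (-(2 * (i : ℤ)))).prod)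

/-- The group element of the free group represented by a word in the generators
and their formal inverses: a letter `(g, true)` stands for the generator `g` and
`(g, false)` for its inverse. -/
def wordProd (l : List (Fin 3 × Bool)) : F3 :=
  (l.map fun p => cond p.2 (FreeGroup.of p.1) (FreeGroup.of p.1)⁻¹).prod

namespace FreeGroup

variable {α : Type*}

theorem Red.count_le [DecidableEq α] {L₁ L₂ : List (α × Bool)} (h : Red L₁ L₂) (a : α × Bool) :
    L₂.count a ≤ L₁.count a :=
  h.sublist.count_le a

theorem count_toWord_mk_le [DecidableEq α] (L : List (α × Bool)) (a : α × Bool) :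
    (mk L).toWord.count a ≤ L.count a := by
  rw [toWord_mk]
  exact reduce.red.count_le a

theorem isReduced_cons_replicate {p q : α × Bool} (h : p.1 ≠ q.1) (k : ℕ) :
    IsReduced (p :: List.replicate k q) := by
  cases k with
  | zero => exact IsReduced.singleton
  | succ k =>
    rw [List.replicate_succ, isReduced_cons_cons, ← List.replicate_succ]
    exact ⟨fun h' => absurd h' h, List.isChain_replicate_of_rel _ fun _ => rfl⟩

theorem isReduced_flatten {a : α} {L : List (List (α × Bool))} (hred : ∀ l ∈ L, IsReduced l)
    (hhead : ∀ l ∈ L, ∃ b t, l = (a, b) :: t) (hlast : ∀ l ∈ L, ∀ p ∈ l.getLast?, p.1 ≠ a) :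
    IsReduced L.flatten := by
  have hnil : [] ∉ L := fun h => by simpa using hhead [] h
  refine (List.isChain_flatten hnil).2 ⟨hred, (List.pairwise_of_forall_mem_list ?_).isChain⟩
  rintro l₁ h₁ l₂ h₂ p hp q hq hpq
  obtain ⟨b, t, rfl⟩ := hhead l₂ h₂
  simp only [List.head?_cons, Option.mem_def, Option.some.injEq] at hq
  exact absurd (hpq.trans (congrArg Prod.fst hq).symm) (hlast l₁ h₁ p hp)

end FreeGroup

theorem wordProd_eq_mk (l : List (Fin 3 × Bool)) : wordProd l = FreeGroup.mk l := by
  rw [wordProd, ← FreeGroup.lift_mk, FreeGroup.lift_of_apply]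

theorem wordProd_flatten (L : List (List (Fin 3 × Bool))) :
    wordProd L.flatten = (L.map wordProd).prod := by
  simp only [wordProd, List.map_flatten, List.prod_flatten, List.map_map, Function.comp_def]
  rfl

/-- The word `x^s y^k z^(-s) y^(-m)`, where `s = true` stands for the exponent `1` and
`s = false` for `-1`. -/
def block (s : Bool) (k m : ℕ) : List (Fin 3 × Bool) :=
  (0, s) :: List.replicate k (1, true) ++ (2, !s) :: List.replicate m (1, false)

/-- The factors `uᵢ y^(-2i)` and `vᵢ y^(-2i+2)` of `wₙ`, written as blocks (indexed from `0`). -/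
def blocksW (n : ℕ) : List (List (Fin 3 × Bool)) :=
  (List.range n).map (fun i => block true (2 * i + 1) (2 * i + 2)) ++
    (List.range n).reverse.map (fun i => block false (2 * i + 1) (2 * i))

theorem wordProd_block_true (i : ℕ) :
    wordProd (block true (2 * i + 1) (2 * i + 2)) =
      f3u (i + 1) * FreeGroup.of 1 ^ (-(2 * ((i : ℤ) + 1))) := by
  have hk : 2 * ((i + 1 : ℕ) : ℤ) - 1 = (2 * i + 1 : ℕ) := by omega
  have hm : -(2 * ((i : ℤ) + 1)) = -(2 * i + 2 : ℕ) := by omega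
  rw [f3u, hk, hm, zpow_neg, zpow_natCast, zpow_natCast]
  simp [block, wordProd, List.prod_replicate, mul_assoc]

theorem wordProd_block_false (i : ℕ) :
    wordProd (block false (2 * i + 1) (2 * i)) = f3v (i + 1) * FreeGroup.of 1 ^ (-(2 * (i : ℤ))) := by
  have hk : 2 * ((i + 1 : ℕ) : ℤ) - 1 = (2 * i + 1 : ℕ) := by omega
  have hm : -(2 * (i : ℤ)) = -(2 * i : ℕ) := by omega
  rw [f3v, hk, hm, zpow_neg, zpow_natCast, zpow_natCast]
  simp [block, wordProd, List.prod_replicate, mul_assoc]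

theorem wordProd_flatten_blocksW (n : ℕ) : wordProd (blocksW n).flatten = f3w n := by
  rw [wordProd_flatten, blocksW, List.map_append, List.prod_append, List.map_map, List.map_map, f3w]
  congr 2
  · exact List.map_congr_left fun i _ => wordProd_block_true i
  · exact List.map_congr_left fun i _ => wordProd_block_false i

theorem isReduced_block (s : Bool) (k m : ℕ) : FreeGroup.IsReduced (block s k m) := by
  refine List.isChain_append.2 ⟨FreeGroup.isReduced_cons_replicate (by simp) k,
    FreeGroup.isReduced_cons_replicate (by simp) m, fun p hp q hq hpq => ?_⟩
  simp only [List.head?_cons, Option.mem_def, Option.some.injEq] at hq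
  subst hq
  rcases List.mem_cons.1 (List.mem_of_getLast? hp) with rfl | hp
  · simp at hpq
  · simp [List.eq_of_mem_replicate hp] at hpq

theorem getLast?_block_fst_ne_zero (s : Bool) (k m : ℕ) :
    ∀ p ∈ (block s k m).getLast?, p.1 ≠ 0 := by
  intro p hp
  have : p ∈ (2, !s) :: List.replicate m (1, false) := by
    rw [block, List.getLast?_append_of_ne_nil _ (List.cons_ne_nil _ _)] at hp
    exact List.mem_of_getLast? hp
  rcases List.mem_cons.1 this with rfl | hp
  · simp
  · simp [List.eq_of_mem_replicate hp]

theorem isReduced_flatten_blocksW (n : ℕ) : FreeGroup.IsReduced (blocksW n).flatten := by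
  have hblock : ∀ l ∈ blocksW n, ∃ s k m, l = block s k m := by
    simp only [blocksW, List.mem_append, List.mem_map]
    rintro l (⟨i, -, rfl⟩ | ⟨i, -, rfl⟩) <;> exact ⟨_, _, _, rfl⟩
  refine FreeGroup.isReduced_flatten (a := 0) (fun l hl => ?_) (fun l hl => ?_) (fun l hl => ?_) <;>
    obtain ⟨s, k, m, rfl⟩ := hblock l hl
  · exact isReduced_block s k m
  · exact ⟨s, _, rfl⟩
  · exact getLast?_block_fst_ne_zero s k m

theorem count_block (s : Bool) (k m : ℕ) : (block s k m).count (1, true) = k := by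
  simp [block, List.count_replicate]

theorem sum_range_odd_eq_sq (n : ℕ) : ((List.range n).map fun i => 2 * i + 1).sum = n ^ 2 := by
  induction n with
  | zero => rfl
  | succ n ih =>
    rw [List.range_succ, List.map_append, List.sum_append, ih]
    simp only [List.map_cons, List.map_nil, List.sum_cons, List.sum_nil, add_zero]
    ring

theorem count_flatten_blocksW (n : ℕ) : (blocksW n).flatten.count (1, true) = 2 * n ^ 2 := by
  simp only [List.count_flatten, blocksW, List.map_append, List.map_map, List.map_reverse,
    List.sum_append, List.sum_reverse, Function.comp_def, count_block, sum_range_odd_eq_sq]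
  ring

theorem count_y_ge_of_eq_f3w_general (n : ℕ) (l : List (Fin 3 × Bool))
    (hl : wordProd l = f3w n) :
    2 * n ^ 2 ≤ l.count ((1 : Fin 3), true) := by
  have htoWord : (FreeGroup.mk l).toWord = (blocksW n).flatten := by
    rw [← wordProd_eq_mk, hl, ← wordProd_flatten_blocksW, wordProd_eq_mk, FreeGroup.toWord_mk,
      (isReduced_flatten_blocksW n).reduce_eq]
  calc 2 * n ^ 2 = (blocksW n).flatten.count (1, true) := (count_flatten_blocksW n).symm
    _ ≤ l.count (1, true) := htoWord ▸ FreeGroup.count_toWord_mk_le l (1, true)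

/-- Every word over `x, y, z, x⁻¹, y⁻¹, z⁻¹` whose product in
the free group equals `wₙ` contains at least `2n²` (positive) occurrences of the
letter `y`. -/
theorem count_y_ge_of_eq_f3w (n : ℕ) (hn : 1 ≤ n) (l : List (Fin 3 × Bool))
    (hl : wordProd l = f3w n) :
    2 * n ^ 2 ≤ l.count ((1 : Fin 3), true) :=
  count_y_ge_of_eq_f3w_general n l hl
end

section
/- Let F₂ be the free group on two generators. Then the word problem WP(F₂ × F₂), with respect to any choice of generators, does not belong to any cone all of whose member languages are semilinear. -/
/-- A subset of a commutative monoid is *linear* if it is a translate of a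
finitely generated submonoid. -/
def IsLinearSet₀ {M : Type*} [AddCommMonoid M] (S : Set M) : Prop :=
  ∃ (v₀ : M) (F : Finset M),
    S = (fun v => v₀ + v) '' (AddSubmonoid.closure (F : Set M) : Set M)

/-- A subset is *semilinear* if it is a finite union of linear sets. -/
def IsSemilinearSet₀ {M : Type*} [AddCommMonoid M] (S : Set M) : Prop :=
  ∃ (n : ℕ) (f : Fin n → Set M), (∀ i, IsLinearSet₀ (f i)) ∧ S = ⋃ i, f i

/-- The Parikh map: `parikh w a` is the number of occurrences of `a` in `w`. -/
noncomputable def parikh {α : Type*} (w : List α) : α → ℕ :=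
  letI := Classical.decEq α
  fun a => w.count a

/-- A language is semilinear if its image under the Parikh map is a
semilinear subset of `ℕ^Σ`. -/
def Language.IsSemilinearLang {α : Type*} (L : Language α) : Prop :=
  IsSemilinearSet₀ (parikh '' (L : Set (List α)))

/-- A cone all of whose member languages are semilinear. -/
def LanguageCone.IsSemilinearCone (𝒞 : LanguageCone) : Prop :=
  ∀ (α : Type) [Fintype α] (L : Language α), 𝒞.mem α L → L.IsSemilinearLang

/-- The free group on two generators. -/
abbrev F2 : Type := FreeGroup (Fin 2)

/-!
Cones are closed under preimages, so from `WP(F₂ × F₂)` we reach the kernel of any homomorphism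
`μ : Σ* → F₂ × F₂`. We choose seven letters and `μ` so that a word
`t^p z (y^m₁ r x^n₁ s) ⋯ (y^mₖ r x^nₖ s) l^c` of the regular language `t* z (y* r x* s)* l*`
lies in the kernel iff `p = k` and the exponents double along the word starting from the seed
`z`: `m₁ = 1`, `nᵢ = 2mᵢ`, `mᵢ₊₁ = 2nᵢ`, `c = 2nₖ` (`c = 1` if `k = 0`); hence `c = 4^k`.
Intersecting with the regular language and erasing every letter but `l` gives `{l^(4^k)}`, whose
Parikh image is not semilinear: an infinite semilinear set contains an infinite arithmetic
progression, and no three powers of `4` are in arithmetic progression.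

The constraints are read off in the lamplighter group `ℤ ≀ ℤ`, a quotient of `F₂ = ⟨A, B⟩` with
`A` a lamp at the origin and `B` the shift: `A^e₀ B A^e₁ B ⋯` has lamp `eᵢ` at position `i`.
-/

theorem IsLinearSet₀.exists_add_nsmul_mem {M : Type*} [AddCommMonoid M] {S : Set M}
    (hS : IsLinearSet₀ S) (hinf : S.Infinite) :
    ∃ v m : M, m ≠ 0 ∧ ∀ n : ℕ, v + n • m ∈ S := by
  obtain ⟨v, F, rfl⟩ := hS
  by_contra! h
  refine hinf ((Set.finite_singleton v).subset ?_)
  rintro _ ⟨m, hm, rfl⟩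
  by_contra hne
  obtain ⟨n, hn⟩ := h v m (by rintro rfl; simp at hne)
  exact hn ⟨n • m, nsmul_mem hm n, rfl⟩

theorem IsSemilinearSet₀.exists_add_nsmul_mem {M : Type*} [AddCommMonoid M] {S : Set M}
    (hS : IsSemilinearSet₀ S) (hinf : S.Infinite) :
    ∃ v m : M, m ≠ 0 ∧ ∀ n : ℕ, v + n • m ∈ S := by
  obtain ⟨k, f, hf, rfl⟩ := hS
  obtain ⟨i, hi⟩ : ∃ i, (f i).Infinite := by
    by_contra! h
    exact hinf (Set.finite_iUnion h)
  obtain ⟨v, m, hm, hvm⟩ := (hf i).exists_add_nsmul_mem hi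
  exact ⟨v, m, hm, fun n => Set.mem_iUnion_of_mem i (hvm n)⟩

theorem Nat.eq_zero_of_forall_add_mul_mem_range_pow {q v d : ℕ} (hq : 2 ≤ q)
    (h : ∀ n : ℕ, v + n * d ∈ Set.range (q ^ ·)) : d = 0 := by
  obtain ⟨i, hi⟩ := h 0
  obtain ⟨j, hj⟩ := h 1
  obtain ⟨k, hk⟩ := h 2
  simp only at hi hj hk
  by_contra hd
  have hjk : j + 1 ≤ k := (Nat.pow_lt_pow_iff_right (by omega)).mp (by omega : q ^ j < q ^ k)
  have : q * q ^ j ≤ q ^ k := by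
    rw [← pow_succ']
    exact Nat.pow_le_pow_right (by omega) hjk
  have : 0 < q ^ i := Nat.pow_pos (by omega)
  nlinarith

theorem not_isSemilinearSet₀_range_pow {ι : Type*} [Nonempty ι] {q : ℕ} (hq : 2 ≤ q) :
    ¬ IsSemilinearSet₀ (Set.range fun k : ℕ => fun _ : ι => q ^ k) := by
  intro hS
  have hinj : Function.Injective fun k : ℕ => fun _ : ι => q ^ k := fun a b hab =>
    Nat.pow_right_injective hq (congrFun hab (Classical.arbitrary ι))
  obtain ⟨v, m, hm, hvm⟩ := hS.exists_add_nsmul_mem (Set.infinite_range_of_injective hinj)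
  obtain ⟨i, hi⟩ := Function.ne_iff.mp hm
  refine hi (Nat.eq_zero_of_forall_add_mul_mem_range_pow (v := v i) hq fun n => ?_)
  obtain ⟨k, hk⟩ := hvm n
  exact ⟨k, by simpa using congrFun hk i⟩

theorem parikh_apply {α : Type*} [DecidableEq α] (w : List α) (a : α) :
    parikh w a = w.count a := by
  unfold parikh
  congr
  exact Subsingleton.elim _ _

theorem GeneratorChoice.exists_comp_eq {α β : Type} {G : Type*} [Fintype α] [Group G]
    (c : GeneratorChoice α G) (μ : FreeMonoid β →* G) :
    ∃ f : FreeMonoid β →* FreeMonoid α, c.π.comp f = μ := by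
  choose g hg using fun b => c.surjective (μ (FreeMonoid.of b))
  exact ⟨FreeMonoid.lift g, FreeMonoid.hom_eq fun b => by simp [hg]⟩

theorem LanguageCone.mem_mker_of_mem_wordProblem (𝒞 : LanguageCone) {α β : Type} [Fintype α]
    [Fintype β] {G : Type*} [Group G] (c : GeneratorChoice α G) (h : 𝒞.mem α (wordProblem c))
    (μ : FreeMonoid β →* G) : 𝒞.mem β (MonoidHom.mker μ : Set (FreeMonoid β)) := by
  obtain ⟨f, rfl⟩ := c.exists_comp_eq μ
  exact 𝒞.preimage_mem β α f _ h

theorem DFA.mem_of_mem_acceptsFrom {α σ : Type*} (M : DFA α σ) (S : σ → Set (List α))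
    (hnil : ∀ q ∈ M.accept, [] ∈ S q) (hcons : ∀ q a w, w ∈ S (M.step q a) → a :: w ∈ S q)
    {q : σ} {w : List α} (hw : w ∈ M.acceptsFrom q) : w ∈ S q := by
  induction w generalizing q with
  | nil => exact hnil q hw
  | cons a w ih => exact hcons q a w (ih hw)

theorem DFA.evalFrom_replicate_of_step_eq {α σ : Type*} (M : DFA α σ) {q : σ} {a : α}
    (h : M.step q a = q) (n : ℕ) : M.evalFrom q (List.replicate n a) = q := by
  induction n with
  | zero => rfl
  | succ n ih => rwa [List.replicate_succ, DFA.evalFrom_cons, h]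

namespace RegularWreathProduct

open Multiplicative

variable {D Q : Type*} [Group D] [Group Q]

def single [DecidableEq Q] : D →* D ≀ᵣ Q where
  toFun d := ⟨Pi.mulSingle 1 d, 1⟩
  map_one' := by ext <;> simp
  map_mul' d d' := by ext <;> simp [Pi.mulSingle_mul]

def nonnegSubmonoid : Submonoid (D ≀ᵣ Multiplicative ℤ) where
  carrier := {g | 0 ≤ toAdd g.right ∧ ∀ j, toAdd j < 0 → g.left j = 1}
  one_mem' := ⟨le_rfl, fun _ _ => rfl⟩
  mul_mem' := by
    rintro g h ⟨hg, hg'⟩ ⟨hh, hh'⟩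
    refine ⟨by simpa using add_nonneg hg hh, fun j hj => ?_⟩
    simp only [mul_left, Pi.mul_apply, hg' j hj, one_mul]
    exact hh' _ (by rw [toAdd_mul, toAdd_inv]; omega)

end RegularWreathProduct

namespace F2

open RegularWreathProduct Multiplicative Subgroup

def A : F2 := FreeGroup.of 0

def B : F2 := FreeGroup.of 1

noncomputable def toLamplighter : F2 →* Multiplicative ℤ ≀ᵣ Multiplicative ℤ :=
  FreeGroup.lift ![single (ofAdd 1), inl (ofAdd 1)]

theorem toLamplighter_zpow_A (e : ℤ) : toLamplighter (A ^ e) = single (ofAdd e) := by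
  rw [map_zpow, toLamplighter, A, FreeGroup.lift_apply_of, Matrix.cons_val_zero, ← map_zpow,
    ← ofAdd_zsmul, smul_eq_mul, mul_one]

theorem toLamplighter_zpow_B (k : ℤ) : toLamplighter (B ^ k) = inl (ofAdd k) := by
  rw [map_zpow, toLamplighter, B, FreeGroup.lift_apply_of, Matrix.cons_val_one,
    Matrix.cons_val_zero, ← map_zpow, ← ofAdd_zsmul, smul_eq_mul, mul_one]

noncomputable def nonnegSubmonoid : Submonoid F2 :=
  RegularWreathProduct.nonnegSubmonoid.comap toLamplighter

theorem zpow_A_mem_nonnegSubmonoid (e : ℤ) : A ^ e ∈ nonnegSubmonoid := by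
  refine ⟨?_, fun j hj => ?_⟩ <;> simp only [toLamplighter_zpow_A, single, MonoidHom.coe_mk,
    OneHom.coe_mk, toAdd_one, le_rfl]
  exact Pi.mulSingle_eq_of_ne (by rintro rfl; simp at hj) _

theorem B_mem_nonnegSubmonoid : B ∈ nonnegSubmonoid := by
  have := toLamplighter_zpow_B 1
  rw [zpow_one] at this
  refine ⟨?_, fun j hj => ?_⟩ <;> simp [this]

noncomputable def originLamp (g : F2) : ℤ := toAdd ((toLamplighter g).left 1)

theorem originLamp_zpow_A_mul (e : ℤ) (g : F2) : originLamp (A ^ e * g) = e + originLamp g := by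
  simp [originLamp, toLamplighter_zpow_A, single]

theorem originLamp_B_mul {g : F2} (hg : g ∈ nonnegSubmonoid) : originLamp (B * g) = 0 := by
  have := toLamplighter_zpow_B 1
  rw [zpow_one] at this
  simpa [originLamp, this] using hg.2 (ofAdd 1)⁻¹ (by simp)

theorem originLamp_of_mem_zpowers {g : F2} (hg : g ∈ zpowers B) : originLamp g = 0 := by
  obtain ⟨k, rfl⟩ := mem_zpowers_iff.mp hg
  simp [originLamp, toLamplighter_zpow_B]

theorem zpow_A_mem_zpowers_iff {e : ℤ} : A ^ e ∈ zpowers B ↔ e = 0 := by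
  refine ⟨fun h => ?_, fun h => by simp [h, one_mem]⟩
  have := originLamp_zpow_A_mul e 1
  rwa [mul_one, originLamp_of_mem_zpowers h, originLamp_of_mem_zpowers (one_mem _), add_zero,
    eq_comm] at this

theorem zpow_A_mul_B_mul_mem_zpowers_iff {e : ℤ} {g : F2} (hg : g ∈ nonnegSubmonoid) :
    A ^ e * (B * g) ∈ zpowers B ↔ e = 0 ∧ g ∈ zpowers B := by
  refine ⟨fun h => ?_, fun ⟨he, hg⟩ => by simpa [he] using mul_mem (mem_zpowers B) hg⟩
  have he : e = 0 := by
    have := originLamp_zpow_A_mul e (B * g)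
    rwa [originLamp_of_mem_zpowers h, originLamp_B_mul hg, add_zero, eq_comm] at this
  subst he
  simpa using mul_mem (inv_mem (mem_zpowers B)) h

end F2

inductive Letter : Type
  | t | z | y | r | x | s | l
  deriving DecidableEq

instance : Fintype Letter := ⟨{.t, .z, .y, .r, .x, .s, .l}, fun a => by cases a <;> decide⟩

namespace Letter

open F2 List Subgroup

def val : Letter → F2 × F2
  | t => (B⁻¹, B⁻¹)
  | z => (A, 1)
  | y => (A⁻¹, A ^ 2)
  | r => (B, 1)
  | x => (A ^ 2, A⁻¹)
  | s => (1, B)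
  | l => (A⁻¹, 1)

noncomputable def ev : FreeMonoid Letter →* F2 × F2 := FreeMonoid.lift val

theorem ev_apply (w : List Letter) : ev w = (w.map val).prod := FreeMonoid.lift_apply _ _

@[simp] theorem ev_nil : ev [] = 1 := rfl

@[simp] theorem ev_cons (γ : Letter) (w : List Letter) : ev (γ :: w) = val γ * ev w := by
  simp [ev_apply]

@[simp] theorem ev_append (u w : List Letter) : ev (u ++ w) = ev u * ev w := by
  simp [ev_apply]

@[simp] theorem ev_replicate (n : ℕ) (γ : Letter) : ev (replicate n γ) = val γ ^ n := by
  simp [ev_apply]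

def chunk : ℕ × ℕ → List Letter
  | (m, n) => replicate m y ++ r :: (replicate n x ++ [s])

def body (ch : List (ℕ × ℕ)) (c : ℕ) : List Letter := ch.flatMap chunk ++ replicate c l

def word (p : ℕ) (ch : List (ℕ × ℕ)) (c : ℕ) : List Letter := replicate p t ++ z :: body ch c

theorem ev_chunk (m n : ℕ) :
    ev (chunk (m, n)) = (A ^ (-(m : ℤ)) * B * A ^ (2 * (n : ℤ)), A ^ (2 * (m : ℤ) - n) * B) := by
  simp only [chunk, ev_append, ev_cons, ev_replicate, ev_nil, val, Prod.pow_mk, Prod.mk_mul_mk,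
    mul_one, one_mul]
  ext <;> simp only <;> group

theorem ev_body_cons (mn : ℕ × ℕ) (ch : List (ℕ × ℕ)) (c : ℕ) :
    ev (body (mn :: ch) c) = ev (chunk mn) * ev (body ch c) := by
  simp [body]

theorem ev_body_nil (c : ℕ) : ev (body [] c) = (A ^ (-(c : ℤ)), 1) := by
  simp [body, val]

theorem val_mem {γ : Letter} (hγ : γ ≠ t) : val γ ∈ nonnegSubmonoid.prod nonnegSubmonoid := by
  have hA : A ∈ nonnegSubmonoid := by simpa using zpow_A_mem_nonnegSubmonoid 1
  have hA_inv : A⁻¹ ∈ nonnegSubmonoid := by simpa using zpow_A_mem_nonnegSubmonoid (-1)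
  have hA_sq : A ^ 2 ∈ nonnegSubmonoid := by simpa using zpow_A_mem_nonnegSubmonoid 2
  cases γ <;> simp_all [val, Submonoid.mem_prod, one_mem, B_mem_nonnegSubmonoid]

theorem ev_body_mem (ch : List (ℕ × ℕ)) (c : ℕ) :
    ev (body ch c) ∈ nonnegSubmonoid.prod nonnegSubmonoid := by
  rw [ev_apply]
  refine Submonoid.list_prod_mem _ fun g hg => ?_
  obtain ⟨γ, hγ, rfl⟩ := mem_map.mp hg
  refine val_mem ?_
  rintro rfl
  simp [body, chunk, mem_flatMap] at hγ

/- Peeling off the first chunk `(m, n)` forces `m = e` and `n = 2m`, and leaves the seed `A^(2n)`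
in front of the remaining chunks. -/
theorem eq_mul_four_pow_of_mem_zpowers (ch : List (ℕ × ℕ)) (e : ℤ) (c : ℕ)
    (h₁ : A ^ e * (ev (body ch c)).1 ∈ zpowers B) (h₂ : (ev (body ch c)).2 ∈ zpowers B) :
    (c : ℤ) = e * 4 ^ ch.length := by
  induction ch generalizing e with
  | nil =>
    rw [ev_body_nil, ← zpow_add, zpow_A_mem_zpowers_iff] at h₁
    simp
    omega
  | cons mn ch ih =>
    obtain ⟨m, n⟩ := mn
    obtain ⟨hF, hS⟩ := Submonoid.mem_prod.mp (ev_body_mem ch c)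
    rw [ev_body_cons, ev_chunk, Prod.fst_mul] at h₁
    rw [ev_body_cons, ev_chunk, Prod.snd_mul] at h₂
    rw [show A ^ e * (A ^ (-(m : ℤ)) * B * A ^ (2 * (n : ℤ)) * (ev (body ch c)).1) =
        A ^ (e - m) * (B * (A ^ (2 * (n : ℤ)) * (ev (body ch c)).1)) by group,
      zpow_A_mul_B_mul_mem_zpowers_iff (mul_mem (zpow_A_mem_nonnegSubmonoid _) hF)] at h₁
    rw [mul_assoc, zpow_A_mul_B_mul_mem_zpowers_iff hS] at h₂
    have := ih (2 * n) h₁.2 h₂.2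
    rw [length_cons, pow_succ]
    linear_combination this - 4 ^ ch.length * (4 * h₁.1 + 2 * h₂.1)

theorem eq_four_pow_of_ev_word_eq_one {p : ℕ} {ch : List (ℕ × ℕ)} {c : ℕ}
    (h : ev (word p ch c) = 1) : c = 4 ^ ch.length := by
  rw [word, ev_append, ev_cons, ev_replicate] at h
  have hbody := eq_inv_of_mul_eq_one_right h
  have h₁ := congrArg Prod.fst hbody
  have h₂ := congrArg Prod.snd hbody
  simp only [val, Prod.fst_mul, Prod.snd_mul, Prod.fst_inv, Prod.snd_inv, Prod.pow_fst,
    Prod.pow_snd, one_mul, inv_pow, inv_inv] at h₁ h₂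
  have := eq_mul_four_pow_of_mem_zpowers ch 1 c
    (by rw [zpow_one, h₁]; exact npow_mem_zpowers B p) (by rw [h₂]; exact npow_mem_zpowers B p)
  exact_mod_cast this.trans (one_mul _)

def doublingChunks : ℕ → ℕ → List (ℕ × ℕ)
  | _, 0 => []
  | e, k + 1 => (e, 2 * e) :: doublingChunks (4 * e) k

theorem ev_body_doublingChunks (e k : ℕ) :
    ev (body (doublingChunks e k) (e * 4 ^ k)) = (A ^ (-(e : ℤ)) * B ^ k, B ^ k) := by
  induction k generalizing e with
  | zero => simp [doublingChunks, ev_body_nil]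
  | succ k ih =>
    rw [doublingChunks, ev_body_cons, show e * 4 ^ (k + 1) = 4 * e * 4 ^ k by ring, ih, ev_chunk]
    ext <;> simp only [Prod.fst_mul, Prod.snd_mul] <;> push_cast <;> group

theorem ev_word_doublingChunks (k : ℕ) : ev (word k (doublingChunks 1 k) (4 ^ k)) = 1 := by
  have := ev_body_doublingChunks 1 k
  rw [one_mul] at this
  rw [word, ev_append, ev_cons, this]
  simp [val]

inductive State : Type
  | seeding | betweenChunks | inY | inX | inL | dead
  deriving DecidableEq

instance : Fintype State :=
  ⟨{.seeding, .betweenChunks, .inY, .inX, .inL, .dead}, fun q => by cases q <;> decide⟩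

/- Recognizes `t* z (y* r x* s)* l*`. -/
def patternDFA : DFA Letter State where
  step
    | .seeding, t => .seeding
    | .seeding, z => .betweenChunks
    | .betweenChunks, y => .inY
    | .betweenChunks, r => .inX
    | .betweenChunks, l => .inL
    | .inY, y => .inY
    | .inY, r => .inX
    | .inX, x => .inX
    | .inX, s => .betweenChunks
    | .inL, l => .inL
    | _, _ => .dead
  start := .seeding
  accept := {.betweenChunks, .inL}

def State.suffixes : State → Set (List Letter)
  | .seeding => {w | ∃ p ch c, w = word p ch c}
  | .betweenChunks => {w | ∃ ch c, w = body ch c}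
  | .inY => {w | ∃ m n ch c, w = replicate m y ++ r :: (replicate n x ++ s :: body ch c)}
  | .inX => {w | ∃ n ch c, w = replicate n x ++ s :: body ch c}
  | .inL => {w | ∃ c, w = replicate c l}
  | .dead => ∅

theorem exists_eq_word_of_mem_accepts {w : List Letter} (hw : w ∈ patternDFA.accepts) :
    ∃ p ch c, w = word p ch c := by
  refine patternDFA.mem_of_mem_acceptsFrom State.suffixes ?_ ?_ hw
  · rintro q (rfl | rfl)
    exacts [⟨[], 0, rfl⟩, ⟨0, rfl⟩]
  · intro q γ w hw
    cases q <;> cases γ <;> simp only [patternDFA, State.suffixes, Set.mem_ofPred_eq] at hw ⊢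
    all_goals try exact hw.elim
    case seeding.t => obtain ⟨p, ch, c, rfl⟩ := hw; exact ⟨p + 1, ch, c, rfl⟩
    case seeding.z => obtain ⟨ch, c, rfl⟩ := hw; exact ⟨0, ch, c, rfl⟩
    case betweenChunks.y =>
      obtain ⟨m, n, ch, c, rfl⟩ := hw
      exact ⟨(m + 1, n) :: ch, c, by simp [body, chunk, replicate_succ]⟩
    case betweenChunks.r =>
      obtain ⟨n, ch, c, rfl⟩ := hw
      exact ⟨(0, n) :: ch, c, by simp [body, chunk]⟩
    case betweenChunks.l => obtain ⟨c, rfl⟩ := hw; exact ⟨[], c + 1, rfl⟩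
    case inY.y => obtain ⟨m, n, ch, c, rfl⟩ := hw; exact ⟨m + 1, n, ch, c, rfl⟩
    case inY.r => obtain ⟨n, ch, c, rfl⟩ := hw; exact ⟨0, n, ch, c, rfl⟩
    case inX.x => obtain ⟨n, ch, c, rfl⟩ := hw; exact ⟨n + 1, ch, c, rfl⟩
    case inX.s => obtain ⟨ch, c, rfl⟩ := hw; exact ⟨0, ch, c, rfl⟩
    case inL.l => obtain ⟨c, rfl⟩ := hw; exact ⟨c + 1, rfl⟩

theorem evalFrom_chunk (mn : ℕ × ℕ) :
    patternDFA.evalFrom .betweenChunks (chunk mn) = .betweenChunks := by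
  obtain ⟨m, n⟩ := mn
  have hx : patternDFA.evalFrom .inX (replicate n x ++ [s]) = .betweenChunks := by
    rw [DFA.evalFrom_of_append, patternDFA.evalFrom_replicate_of_step_eq rfl]
    rfl
  cases m with
  | zero => exact hx
  | succ m =>
    rw [chunk, replicate_succ, cons_append, DFA.evalFrom_cons, DFA.evalFrom_of_append,
      patternDFA.evalFrom_replicate_of_step_eq rfl]
    exact hx

theorem word_mem_accepts (p : ℕ) (ch : List (ℕ × ℕ)) (c : ℕ) :
    word p ch c ∈ patternDFA.accepts := by
  have hchunks : patternDFA.evalFrom .betweenChunks (ch.flatMap chunk) = .betweenChunks := by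
    induction ch with
    | nil => rfl
    | cons mn ch ih => rw [flatMap_cons, DFA.evalFrom_of_append, evalFrom_chunk, ih]
  rw [DFA.mem_accepts, DFA.eval, word, DFA.evalFrom_of_append,
    patternDFA.evalFrom_replicate_of_step_eq rfl, DFA.evalFrom_cons, body,
    DFA.evalFrom_of_append, show patternDFA.step patternDFA.start z = .betweenChunks from rfl,
    hchunks]
  cases c with
  | zero => exact Or.inl rfl
  | succ c =>
    rw [replicate_succ, DFA.evalFrom_cons, patternDFA.evalFrom_replicate_of_step_eq rfl]
    exact Or.inr rfl

noncomputable def keepL : FreeMonoid Letter →* FreeMonoid Unit :=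
  FreeMonoid.lift fun γ => if γ = l then FreeMonoid.of () else 1

theorem keepL_ofList (w : List Letter) :
    keepL (.ofList w) = .ofList (replicate (w.count l) ()) := by
  induction w with
  | nil => rfl
  | cons γ w ih =>
    rw [FreeMonoid.ofList_cons, map_mul, ih]
    by_cases hγ : γ = l <;> simp [keepL, hγ, replicate_succ, FreeMonoid.ofList_cons]

theorem parikh_keepL (w : List Letter) : parikh (keepL (.ofList w)) = fun _ => w.count l := by
  funext u
  rw [keepL_ofList]
  exact (parikh_apply _ u).trans count_replicate_self

theorem count_l_word (p : ℕ) (ch : List (ℕ × ℕ)) (c : ℕ) : (word p ch c).count l = c := by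
  have : ∀ mn, (chunk mn).count l = 0 := fun ⟨m, n⟩ => by simp [chunk, count_replicate]
  simp [word, body, count_flatMap, count_replicate, Function.comp_def, this]

theorem parikh_image_keepL :
    parikh '' (keepL '' ((MonoidHom.mker ev : Set (FreeMonoid Letter)) ∩ patternDFA.accepts)) =
      Set.range fun k : ℕ => fun _ : Unit => 4 ^ k := by
  ext v
  constructor
  · rintro ⟨_, ⟨w, ⟨hev, hacc⟩, rfl⟩, rfl⟩
    obtain ⟨p, ch, c, rfl⟩ := exists_eq_word_of_mem_accepts hacc
    refine ⟨ch.length, ((parikh_keepL (word p ch c)).trans ?_).symm⟩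
    rw [count_l_word, eq_four_pow_of_ev_word_eq_one hev]
  · rintro ⟨k, rfl⟩
    exact ⟨_, ⟨_, ⟨ev_word_doublingChunks k, word_mem_accepts _ _ _⟩, rfl⟩,
      (parikh_keepL (word k (doublingChunks 1 k) (4 ^ k))).trans (by rw [count_l_word])⟩

theorem not_isSemilinearLang_keepL_image :
    ¬ Language.IsSemilinearLang (α := Unit)
      (keepL '' ((MonoidHom.mker ev : Set (FreeMonoid Letter)) ∩ patternDFA.accepts)) := by
  unfold Language.IsSemilinearLang
  rw [parikh_image_keepL]
  exact not_isSemilinearSet₀_range_pow (by norm_num)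

end Letter

/-- The word problem of `F₂ × F₂`, with respect to any choice
of generators, does not belong to any cone all of whose members are
semilinear. -/
theorem wordProblem_F2xF2_not_in_semilinear_cone
    (𝒞 : LanguageCone) (hsemi : 𝒞.IsSemilinearCone)
    (α : Type) [Fintype α] (c : GeneratorChoice α (F2 × F2)) :
    ¬ 𝒞.mem α (wordProblem c) := by
  intro hmem
  have hpattern := 𝒞.inter_regular_mem Letter _ _
    (𝒞.mem_mker_of_mem_wordProblem c hmem Letter.ev) ⟨_, inferInstance, Letter.patternDFA, rfl⟩
  exact Letter.not_isSemilinearLang_keepL_image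
    (hsemi Unit _ (𝒞.image_mem Letter Unit Letter.keepL _ hpattern))
end

section
/- Let F₂ be the free group on generators a, b, and let f : F₂ → ℤ² be the abelianization homomorphism. Then the fibre product P = {(u, v) ∈ F₂ × F₂ : f(u) = f(v)} is the subgroup of F₂ × F₂ generated by the three elements r = (a, a), s = (b, b), and t = (a·b·a⁻¹·b⁻¹, 1). -/
/-- The abelianization homomorphism `F₂ → ℤ²` (written multiplicatively),
sending `a ↦ (1,0)` and `b ↦ (0,1)`. -/
def abMap : F2 →* Multiplicative (Fin 2 → ℤ) :=
  FreeGroup.lift fun i => Multiplicative.ofAdd (Pi.single i 1)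

/-! The subgroup `H` generated by `r`, `s`, `t` contains the diagonal, since `r` and `s`
generate it, so conjugating by diagonal elements shows that `K = {w | (w, 1) ∈ H}` is a normal
subgroup of `F₂`. It contains `[a, b]`, hence the commutator subgroup of `F₂ = ⟨a, b⟩`, which is
the kernel of `f` because `ℤ²` is the free abelian group on `a`, `b`. Every `(u, v)` in the
fibre product then factors as `(u v⁻¹, 1) · (v, v)` with `u v⁻¹ ∈ ker f`. -/

open scoped commutatorElement

namespace Subgroup

variable {G : Type*} [Group G]

theorem mul_comm_of_closure_eq_top {s : Set G} (hs : closure s = ⊤)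
    (hcomm : ∀ x ∈ s, ∀ y ∈ s, x * y = y * x) (a b : G) : a * b = b * a :=
  have hle := hs ▸ closure_le_centralizer_centralizer s
  Set.centralizer_centralizer_comm_of_comm hcomm a (hle (mem_top a)) b (hle (mem_top b))

theorem commutator_le_of_closure_eq_top {N : Subgroup G} [N.Normal] {s : Set G}
    (hs : closure s = ⊤) (hN : ∀ x ∈ s, ∀ y ∈ s, ⁅x, y⁆ ∈ N) :
    _root_.commutator G ≤ N := by
  let q := QuotientGroup.mk' N
  have hq : closure (q '' s) = ⊤ := by
    rw [← MonoidHom.map_closure, hs, ← MonoidHom.range_eq_map, QuotientGroup.range_mk']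
  have hcomm : ∀ a ∈ q '' s, ∀ b ∈ q '' s, a * b = b * a := by
    rintro _ ⟨x, hx, rfl⟩ _ ⟨y, hy, rfl⟩
    rw [← commutatorElement_eq_one_iff_mul_comm, ← map_commutatorElement,
      QuotientGroup.mk'_apply, QuotientGroup.eq_one_iff]
    exact hN x hx y hy
  refine commutator_le.2 fun g _ h _ => ?_
  rw [← QuotientGroup.eq_one_iff, ← QuotientGroup.mk'_apply, map_commutatorElement,
    commutatorElement_eq_one_iff_mul_comm]
  exact mul_comm_of_closure_eq_top hq hcomm _ _

theorem diag_mem_of_closure_eq_top {s : Set G} (hs : closure s = ⊤) {H : Subgroup (G × G)}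
    (hH : ∀ x ∈ s, (x, x) ∈ H) (g : G) : (g, g) ∈ H := by
  induction hs ▸ mem_top g using closure_induction with
  | mem x hx => exact hH x hx
  | one => exact H.one_mem
  | mul x y _ _ hx hy => exact H.mul_mem hx hy
  | inv x _ hx => exact H.inv_mem hx

theorem normal_comap_inl_of_diag_mem {H : Subgroup (G × G)} (hH : ∀ g, (g, g) ∈ H) :
    (H.comap (MonoidHom.inl G G)).Normal where
  conj_mem w hw g := by
    have : ((g, g) * (w, 1) * (g, g)⁻¹ : G × G) ∈ H :=
      H.mul_mem (H.mul_mem (hH g) hw) (H.inv_mem (hH g))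
    simpa using this

theorem eqLocus_le_of_ker_le {M : Type*} [Monoid M] (f : G →* M) {H : Subgroup (G × G)}
    (hH : ∀ g, (g, g) ∈ H) (hker : f.ker ≤ H.comap (MonoidHom.inl G G)) :
    (f.comp (MonoidHom.fst G G)).eqLocus (f.comp (MonoidHom.snd G G)) ≤ H := by
  rintro ⟨u, v⟩ (huv : f u = f v)
  have hk : u * v⁻¹ ∈ f.ker := by
    rw [MonoidHom.mem_ker, map_mul, huv, ← map_mul, mul_inv_cancel, map_one]
  have : ((u * v⁻¹, 1) * (v, v) : G × G) ∈ H := H.mul_mem (hker hk) (hH v)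
  simpa using this

end Subgroup

namespace FreeGroup

variable {ι : Type*} [Fintype ι] [DecidableEq ι]

theorem ker_lift_ofAdd_single :
    (lift fun i : ι => Multiplicative.ofAdd (Pi.single i (1 : ℤ))).ker =
      commutator (FreeGroup ι) := by
  refine le_antisymm ?_ (Abelianization.commutator_subset_ker _)
  let ψ : Multiplicative (ι → ℤ) →* Abelianization (FreeGroup ι) :=
    MonoidHom.mk' (fun x => ∏ i, Abelianization.of (of i) ^ (x.toAdd i)) fun x y => by
      simp only [toAdd_mul, Pi.add_apply, zpow_add, Finset.prod_mul_distrib]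
  have hψ : ψ.comp (lift fun i : ι => Multiplicative.ofAdd (Pi.single i (1 : ℤ))) =
      Abelianization.of := by
    ext i
    simp [ψ, Pi.single_apply]
  intro w hw
  rw [← Abelianization.ker_of, MonoidHom.mem_ker, ← hψ, MonoidHom.comp_apply, hw,
    _root_.map_one]

end FreeGroup

open Subgroup in
/-- The fibre product `{(u,v) ∈ F₂ × F₂ : f(u) = f(v)}` of the
abelianization map is generated by `r = (a,a)`, `s = (b,b)` and
`t = (aba⁻¹b⁻¹, 1)`. -/
theorem fibreProduct_eq_closure :
    ∀ p : F2 × F2,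
      p ∈ Subgroup.closure
          {(FreeGroup.of 0, FreeGroup.of 0), (FreeGroup.of 1, FreeGroup.of 1),
            (FreeGroup.of 0 * FreeGroup.of 1 * (FreeGroup.of 0)⁻¹ * (FreeGroup.of 1)⁻¹, 1)} ↔
      abMap p.1 = abMap p.2 := by
  set a : F2 := FreeGroup.of 0
  set b : F2 := FreeGroup.of 1
  set H : Subgroup (F2 × F2) := closure {(a, a), (b, b), (⁅a, b⁆, 1)}
  have hgen : closure (Set.range FreeGroup.of) = (⊤ : Subgroup F2) := FreeGroup.closure_range_of _
  have hker : abMap.ker = commutator F2 := FreeGroup.ker_lift_ofAdd_single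
  have hab : (⁅a, b⁆, 1) ∈ H := subset_closure (.inr (.inr rfl))
  have hba : (⁅b, a⁆, 1) ∈ H := by
    simpa only [Prod.inv_mk, commutatorElement_inv, inv_one] using H.inv_mem hab
  have hdiag : ∀ g, (g, g) ∈ H := diag_mem_of_closure_eq_top hgen <| by
    simp only [Set.forall_mem_range, Fin.forall_fin_two]
    exact ⟨subset_closure (.inl rfl), subset_closure (.inr (.inl rfl))⟩
  have hcomm : commutator F2 ≤ H.comap (MonoidHom.inl F2 F2) :=
    have := normal_comap_inl_of_diag_mem hdiag
    commutator_le_of_closure_eq_top hgen <| by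
      simp only [Set.forall_mem_range, Fin.forall_fin_two, commutatorElement_self]
      exact ⟨⟨one_mem _, hab⟩, hba, one_mem _⟩
  have hH : H = (abMap.comp (MonoidHom.fst F2 F2)).eqLocus (abMap.comp (MonoidHom.snd F2 F2)) := by
    refine le_antisymm ((closure_le _).2 ?_) (eqLocus_le_of_ker_le abMap hdiag (hker ▸ hcomm))
    rintro _ (rfl | rfl | rfl)
    · rfl
    · rfl
    · exact (hker ▸ commutator_mem_commutator (mem_top a) (mem_top b) : ⁅a, b⁆ ∈ abMap.ker)
  exact SetLike.ext_iff.1 hH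
end

section
/- Let CoG (the class of cographs) be the smallest class of finite simple graphs that contains the one-vertex graph K₁ and is closed under complementation and disjoint union. Then: (1) every connected cograph with more than one vertex is a join (its vertex set admits a partition into two nonempty sets with every vertex of one part adjacent to every vertex of the other); and (2) a finite simple graph is a cograph if and only if it has no induced subgraph isomorphic to P₄, the path graph on four vertices. -/
/-- A graph is a *join* if its vertex set splits into two nonempty parts with
every vertex of one part adjacent to every vertex of the other. -/
def SimpleGraph.IsJoin {V : Type} (G : SimpleGraph V) : Prop :=
  ∃ J K : Set V, J.Nonempty ∧ K.Nonempty ∧ Disjoint J K ∧ J ∪ K = Set.univ ∧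
    ∀ v ∈ J, ∀ w ∈ K, G.Adj v w

/-- The class of *cographs*: the smallest class of graphs containing the
one-vertex graph and closed (up to isomorphism) under complementation and
disjoint union. -/
inductive IsCograph : ∀ V : Type, SimpleGraph V → Prop
  | single : IsCograph PUnit ⊥
  | compl {V : Type} {G : SimpleGraph V} : IsCograph V G → IsCograph V Gᶜ
  | disjUnion {V W : Type} {G : SimpleGraph V} {H : SimpleGraph W} :
      IsCograph V G → IsCograph W H → IsCograph (V ⊕ W) (G ⊕g H)
  | iso {V W : Type} {G : SimpleGraph V} {H : SimpleGraph W} :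
      G ≃g H → IsCograph V G → IsCograph W H

/-- A graph has an induced `P₄` if four distinct vertices induce a subgraph
isomorphic to the path on four vertices. -/
def SimpleGraph.HasInducedP4 {V : Type} (G : SimpleGraph V) : Prop :=
  ∃ f : Fin 4 ↪ V, ∀ i j : Fin 4, (SimpleGraph.pathGraph 4).Adj i j ↔ G.Adj (f i) (f j)

/-!
Seinsche's lemma: if `G` has no induced `P₄` and at least two vertices, then `G` or `Gᶜ` is
disconnected. Delete a vertex `v` and induct; by symmetry `G - v` is disconnected. If `G` is
connected and `v` has a non-neighbour `w`, an edge `a - b` of the component of `w` with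
`a ∼ v ≁ b`, together with a neighbour `c` of `v` in another component, forms the induced path
`c - v - a - b`. So `v` dominates `G`, and is isolated in `Gᶜ`.

Since `P₄` is connected and self-complementary, `P₄`-freeness survives complements and disjoint
unions, so cographs are `P₄`-free. Conversely a `P₄`-free graph splits, by Seinsche's lemma, as a
disjoint union of smaller `P₄`-free graphs, or is the complement of one. A connected cograph has
disconnected complement, which is exactly a join.
-/

namespace SimpleGraph

variable {U V W : Type} {G : SimpleGraph V} {H : SimpleGraph W}

theorem Preconnected.mem_of_adj_closed (hG : G.Preconnected) {S : Set V}
    (hS : ∀ ⦃a b⦄, G.Adj a b → a ∈ S → b ∈ S) {u : V} (hu : u ∈ S) (w : V) : w ∈ S := by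
  by_contra hw
  obtain ⟨d, -, hd, hd'⟩ := (hG u w).some.exists_boundary_dart S hu hw
  exact hd' (hS d.adj hd)

/-- The boundary dart of `P ∪ {x | x cannot reach w}` is an edge leaving `P` inside the
component of `w`. -/
theorem Reachable.exists_adj_boundary {P : V → Prop} {u w : V} (h : G.Reachable u w)
    (hu : P u) (hw : ¬P w) : ∃ a b, G.Adj a b ∧ P a ∧ ¬P b ∧ G.Reachable b w := by
  obtain ⟨d, -, hd, hd'⟩ :=
    h.some.exists_boundary_dart {x | P x ∨ ¬G.Reachable x w} (.inl hu) (by simp [hw])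
  simp only [Set.mem_ofPred_eq, not_or, not_not] at hd hd'
  exact ⟨d.fst, d.snd, d.adj, hd.resolve_right (not_not.2 (d.adj.reachable.trans hd'.2)), hd'⟩

theorem Preconnected.exists_adj_reachable_induce_compl_singleton (hG : G.Preconnected) (v : V)
    (x : ({v}ᶜ : Set V)) :
    ∃ c : ({v}ᶜ : Set V), G.Adj v c ∧ (G.induce {v}ᶜ).Reachable c x := by
  let S : Set V := {u | ∀ hu : u ≠ v,
    ∃ c : ({v}ᶜ : Set V), G.Adj v c ∧ (G.induce {v}ᶜ).Reachable c ⟨u, hu⟩}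
  have hS : ∀ ⦃a b⦄, G.Adj a b → a ∈ S → b ∈ S := by
    intro a b hab ha hb
    by_cases hav : a = v
    · subst hav
      exact ⟨⟨b, hb⟩, hab, .rfl⟩
    · obtain ⟨c, hvc, hc⟩ := ha hav
      exact ⟨c, hvc, hc.trans (Adj.reachable (G := G.induce {v}ᶜ) (u := ⟨a, hav⟩) hab)⟩
  exact hG.mem_of_adj_closed hS (u := v) (fun h => (h rfl).elim) x x.2

theorem compl_induce (s : Set V) : (G.induce s)ᶜ = Gᶜ.induce s := by
  ext u w
  simp [Subtype.ext_iff]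

theorem exists_set_not_adj_compl_of_not_preconnected (h : ¬G.Preconnected) :
    ∃ S : Set V, S.Nonempty ∧ Sᶜ.Nonempty ∧ ∀ u ∈ S, ∀ w ∉ S, ¬G.Adj u w := by
  simp only [Preconnected, not_forall] at h
  obtain ⟨u, w, huw⟩ := h
  exact ⟨{x | G.Reachable u x}, ⟨u, .rfl⟩, ⟨w, huw⟩,
    fun x hx y hy hxy => hy (hx.trans hxy.reachable)⟩

theorem isJoin_of_not_preconnected_compl (h : ¬Gᶜ.Preconnected) : G.IsJoin := by
  obtain ⟨S, hS, hSc, hadj⟩ := exists_set_not_adj_compl_of_not_preconnected h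
  refine ⟨S, Sᶜ, hS, hSc, disjoint_compl_right, Set.union_compl_self S, fun u hu w hw => ?_⟩
  by_contra huw
  exact hadj u hu w hw ((compl_adj G u w).2 ⟨fun h => hw (h ▸ hu), huw⟩)

def Iso.sumInduceCompl (S : Set V) [DecidablePred (· ∈ S)]
    (hS : ∀ u ∈ S, ∀ w ∉ S, ¬G.Adj u w) : G.induce S ⊕g G.induce Sᶜ ≃g G where
  toEquiv := Equiv.Set.sumCompl S
  map_rel_iff' := by
    rintro (⟨u, hu⟩ | ⟨u, hu⟩) (⟨w, hw⟩ | ⟨w, hw⟩)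
    · simp
    · simpa using hS u hu w hw
    · simpa using fun h => hS w hw u hu h.symm
    · simp

theorem hasInducedP4_iff_nonempty_embedding :
    G.HasInducedP4 ↔ Nonempty (pathGraph 4 ↪g G) :=
  ⟨fun ⟨f, hf⟩ => ⟨⟨f, (hf _ _).symm⟩⟩, fun ⟨f⟩ => ⟨f.toEmbedding, fun _ _ => f.map_adj_iff.symm⟩⟩

theorem HasInducedP4.map (h : G.HasInducedP4) (f : G ↪g H) : H.HasInducedP4 := by
  obtain ⟨g⟩ := hasInducedP4_iff_nonempty_embedding.1 h
  exact hasInducedP4_iff_nonempty_embedding.2 ⟨f.comp g⟩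

theorem hasInducedP4_of_adj {a b c d : V} (hab : G.Adj a b) (hbc : G.Adj b c) (hcd : G.Adj c d)
    (hac : ¬G.Adj a c) (had : ¬G.Adj a d) (hbd : ¬G.Adj b d)
    (hac' : a ≠ c) (had' : a ≠ d) (hbd' : b ≠ d) : G.HasInducedP4 := by
  refine ⟨⟨![a, b, c, d], fun i j hij => ?_⟩, fun i j => ?_⟩
  · fin_cases i <;> fin_cases j <;> simp_all [hab.ne, hbc.ne, hcd.ne, eq_comm]
  · change _ ↔ G.Adj (![a, b, c, d] i) (![a, b, c, d] j)
    have hca : ¬G.Adj c a := fun h => hac h.symm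
    have hda : ¬G.Adj d a := fun h => had h.symm
    have hdb : ¬G.Adj d b := fun h => hbd h.symm
    fin_cases i <;> fin_cases j <;>
      simp [pathGraph_adj, hab, hbc, hcd, hab.symm, hbc.symm, hcd.symm, hac, had, hbd, hca, hda,
        hdb]

def pathGraphFourIsoCompl : pathGraph 4 ≃g (pathGraph 4)ᶜ where
  toEquiv := ⟨![1, 3, 0, 2], ![2, 0, 3, 1], by decide, by decide⟩
  map_rel_iff' := by
    simp only [compl_adj, pathGraph_adj]
    decide

theorem HasInducedP4.of_compl (h : Gᶜ.HasInducedP4) : G.HasInducedP4 := by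
  obtain ⟨f⟩ := hasInducedP4_iff_nonempty_embedding.1 h
  have g : (pathGraph 4)ᶜ ↪g G := compl_compl G ▸ Embedding.complEquiv f
  exact hasInducedP4_iff_nonempty_embedding.2 ⟨g.comp pathGraphFourIsoCompl.toEmbedding⟩

theorem hasInducedP4_compl : Gᶜ.HasInducedP4 ↔ G.HasInducedP4 :=
  ⟨.of_compl, fun h => .of_compl ((compl_compl G).symm ▸ h)⟩

theorem Embedding.nonempty_of_forall_isLeft {P : SimpleGraph U} (f : P ↪g G ⊕g H)
    (hf : ∀ u, (f u).isLeft) : Nonempty (P ↪g G) := by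
  have hinl : ∀ u, Sum.inl ((f u).getLeft (hf u)) = f u := fun u => Sum.inl_getLeft _ _
  refine ⟨⟨⟨fun u => (f u).getLeft (hf u), fun u u' h => f.injective ?_⟩, fun {u u'} => ?_⟩⟩
  · rw [← hinl u, ← hinl u']
    exact congrArg Sum.inl h
  · rw [← f.map_adj_iff, ← hinl u, ← hinl u', sum_adj_inl]
    rfl

theorem Embedding.nonempty_or_nonempty_of_sum {P : SimpleGraph U} [Nonempty U]
    (hP : P.Preconnected) (f : P ↪g G ⊕g H) : Nonempty (P ↪g G) ∨ Nonempty (P ↪g H) := by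
  obtain ⟨u₀⟩ := ‹Nonempty U›
  have same_side : ∀ u, (f u).isLeft = (f u₀).isLeft := fun u => by
    have := (hP u₀ u).map f.toHom
    cases h₀ : f u₀ <;> cases h : f u <;> simp_all [not_reachable_sum_inl_inr, reachable_comm]
  cases h₀ : f u₀
  · exact .inl (nonempty_of_forall_isLeft f fun u => by simp [same_side u, h₀])
  · refine .inr (nonempty_of_forall_isLeft (Iso.sumComm.toEmbedding.comp f) fun u => ?_)
    simp [Iso.sumComm, ← Sum.not_isLeft, same_side u, h₀]

theorem HasInducedP4.sum (h : (G ⊕g H).HasInducedP4) : G.HasInducedP4 ∨ H.HasInducedP4 := by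
  simp only [hasInducedP4_iff_nonempty_embedding] at h ⊢
  obtain ⟨f⟩ := h
  exact Embedding.nonempty_or_nonempty_of_sum (pathGraph_preconnected 4) f

/-- `c` lies outside the component of `w` in `G - v`, while `a - b` is an edge of that component
with `a ∼ v ≁ b`; so `c - v - a - b` is an induced `P₄`. -/
theorem adj_of_not_preconnected_induce_compl_singleton (hP4 : ¬G.HasInducedP4)
    (hG : G.Preconnected) {v : V} (hv : ¬(G.induce {v}ᶜ).Preconnected) {w : V} (hw : w ≠ v) :
    G.Adj v w := by
  by_contra hvw
  set G' := G.induce {v}ᶜ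
  obtain ⟨x, hx⟩ : ∃ x, ¬G'.Reachable x ⟨w, hw⟩ := by
    by_contra! h
    exact hv fun a b => (h a).trans (h b).symm
  obtain ⟨c, hvc, hcx⟩ := hG.exists_adj_reachable_induce_compl_singleton v x
  obtain ⟨y, hvy, hyw⟩ := hG.exists_adj_reachable_induce_compl_singleton v ⟨w, hw⟩
  obtain ⟨a, b, hab, hva, hvb, hbw⟩ :=
    hyw.exists_adj_boundary (P := fun u : ({v}ᶜ : Set V) => G.Adj v u) hvy hvw
  have hcw : ¬G'.Reachable c ⟨w, hw⟩ := fun h => hx (hcx.symm.trans h)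
  have hca : ¬G'.Reachable c a := fun h => hcw (h.trans (hab.reachable.trans hbw))
  have hcb : ¬G'.Reachable c b := fun h => hcw (h.trans hbw)
  exact hP4 (hasInducedP4_of_adj hvc.symm hva hab (fun h => hca (Adj.reachable (G := G') h))
    (fun h => hcb (Adj.reachable (G := G') h)) hvb (fun h => hca (Subtype.ext h ▸ .rfl))
    (fun h => hcb (Subtype.ext h ▸ .rfl)) (fun h => b.2 h.symm))

theorem not_preconnected_or_not_preconnected_compl_of_induce (hP4 : ¬G.HasInducedP4) {v : V}
    (hv : ¬(G.induce {v}ᶜ).Preconnected) : ¬G.Preconnected ∨ ¬Gᶜ.Preconnected := by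
  refine or_iff_not_imp_left.2 fun hG hGc => ?_
  rw [not_not] at hG
  obtain ⟨⟨x, hx⟩, -⟩ : ∃ a b : ({v}ᶜ : Set V), ¬(G.induce {v}ᶜ).Reachable a b := by
    simpa [Preconnected] using hv
  have : Nontrivial V := ⟨⟨v, x, fun h => hx h.symm⟩⟩
  obtain ⟨w, hw⟩ := hGc.exists_adj_of_nontrivial v
  obtain ⟨hvw, hnadj⟩ := (compl_adj G v w).1 hw
  exact hnadj (adj_of_not_preconnected_induce_compl_singleton hP4 hG hv hvw.symm)

theorem not_preconnected_or_not_preconnected_compl [Finite V] [Nontrivial V]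
    (hP4 : ¬G.HasInducedP4) : ¬G.Preconnected ∨ ¬Gᶜ.Preconnected := by
  induction h : Nat.card V using Nat.strong_induction_on generalizing V with
  | _ n ih =>
  obtain ⟨v⟩ := ‹Nontrivial V›.to_nonempty
  rcases subsingleton_or_nontrivial ({v}ᶜ : Set V) with hs | hs
  · refine or_iff_not_imp_left.2 fun hG hGc => ?_
    rw [not_not] at hG
    obtain ⟨a, ha⟩ := hG.exists_adj_of_nontrivial v
    obtain ⟨b, hb⟩ := hGc.exists_adj_of_nontrivial v
    obtain ⟨hvb, hnadj⟩ := (compl_adj G v b).1 hb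
    have hab : a = b := congrArg Subtype.val (hs.elim ⟨a, ha.ne.symm⟩ ⟨b, hvb.symm⟩)
    exact hnadj (hab ▸ ha)
  rcases ih _ (h ▸ Finite.card_subtype_lt (x := v) (by simp)) (G := G.induce {v}ᶜ)
    (fun h => hP4 (h.map (Embedding.induce _))) rfl with h' | h'
  · exact not_preconnected_or_not_preconnected_compl_of_induce hP4 h'
  · rw [compl_induce] at h'
    simpa [or_comm] using
      not_preconnected_or_not_preconnected_compl_of_induce (hasInducedP4_compl.not.2 hP4) h'

end SimpleGraph

open SimpleGraph

theorem IsCograph.not_hasInducedP4 {V : Type} {G : SimpleGraph V} (h : IsCograph V G) :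
    ¬G.HasInducedP4 := by
  induction h with
  | single =>
    rw [hasInducedP4_iff_nonempty_embedding]
    rintro ⟨f⟩
    exact absurd (f.injective (Subsingleton.elim _ _ : f 0 = f 1)) (by decide)
  | compl _ ih => exact hasInducedP4_compl.not.2 ih
  | disjUnion _ _ ihG ihH => exact fun h => h.sum.elim ihG ihH
  | iso e _ ih => exact fun h => ih (h.map e.symm.toEmbedding)

theorem isCograph_of_subsingleton {V : Type} [Nonempty V] [Subsingleton V] (G : SimpleGraph V) :
    IsCograph V G :=
  .iso ⟨Equiv.punitOfNonemptyOfSubsingleton.symm, fun {u w} => by simp [Subsingleton.elim u w]⟩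
    .single

theorem IsCograph.of_not_preconnected {V : Type} {G : SimpleGraph V} (hG : ¬G.Preconnected)
    (ih : ∀ S : Set V, S.Nonempty → Sᶜ.Nonempty → IsCograph S (G.induce S)) : IsCograph V G := by
  classical
  obtain ⟨S, hS, hSc, hadj⟩ := exists_set_not_adj_compl_of_not_preconnected hG
  exact .iso (Iso.sumInduceCompl S hadj)
    ((ih S hS hSc).disjUnion (ih Sᶜ hSc (by rwa [compl_compl])))

theorem isCograph_of_not_hasInducedP4 {V : Type} [Finite V] [Nonempty V] {G : SimpleGraph V}
    (hG : ¬G.HasInducedP4) : IsCograph V G := by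
  induction h : Nat.card V using Nat.strong_induction_on generalizing V with
  | _ n ih =>
  have ih_induce (G' : SimpleGraph V) (hG' : ¬G'.HasInducedP4) (S : Set V) (hS : S.Nonempty)
      (hSc : Sᶜ.Nonempty) : IsCograph S (G'.induce S) := by
    obtain ⟨⟨u, hu⟩, ⟨w, hw⟩⟩ := And.intro hS hSc
    have : Nonempty S := ⟨⟨u, hu⟩⟩
    exact ih _ (h ▸ Finite.card_subtype_lt hw) (fun h => hG' (h.map (Embedding.induce S))) rfl
  rcases subsingleton_or_nontrivial V with _ | _
  · exact isCograph_of_subsingleton G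
  rcases not_preconnected_or_not_preconnected_compl hG with h' | h'
  · exact .of_not_preconnected h' (ih_induce G hG)
  · have hGc := IsCograph.of_not_preconnected h' (ih_induce Gᶜ (hasInducedP4_compl.not.2 hG))
    simpa using hGc.compl

/-- (1) Every connected cograph with more than one vertex is a
join; (2) a (nonempty) finite graph is a cograph if and only if it has no
induced `P₄`. -/
theorem cograph_join_and_P4_characterization :
    (∀ (V : Type) [Fintype V] (G : SimpleGraph V),
        IsCograph V G → G.Connected → 1 < Fintype.card V → G.IsJoin) ∧
    (∀ (V : Type) [Fintype V] [Nonempty V] (G : SimpleGraph V),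
        IsCograph V G ↔ ¬ G.HasInducedP4) := by
  refine ⟨fun V _ G hG hconn hcard => ?_,
    fun V _ _ G => ⟨IsCograph.not_hasInducedP4, isCograph_of_not_hasInducedP4⟩⟩
  have : Nontrivial V := Fintype.one_lt_card_iff_nontrivial.1 hcard
  exact isJoin_of_not_preconnected_compl
    ((not_preconnected_or_not_preconnected_compl hG.not_hasInducedP4).resolve_left
      (not_not.2 hconn.preconnected))
end
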